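/- arXiv:1512.02367 — 7 statements merged into one kernel-verified Lean document; each statement's English description precedes it below -/
import Mathlib

section
/- Suppose λ ∈ ρ + C (λ lies in the shifted Weyl chamber) and μ ∈ E. Then ‖λ − μ‖² ≥ (1/2)·Σ_{α ∈ Δ⁺, (α,μ)=0} (λ,α). -/
open scoped RealInnerProductSpace
open Finset

/-!
Write `P` for the positive roots and `s_α` for the reflection in `α`. For `α ∈ P`, the map
sending `β ∈ P` to whichever of `± s_α β` is positive is an involution of `P`, and it negates
`⟪β, α⟫` exactly when `s_α β ∈ P`. Hence those terms cancel in `⟪∑ P, α⟫`, and `⟪2ρ, α⟫` is the sum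
of the terms `⟪β, α⟫` over the `β ∈ P` made negative by `s_α`, each of them positive. Passing to
the subsystem of roots orthogonal to `μ` only removes such terms, so `⟪ρ_μ, δ⟫ ≤ ⟪ρ, δ⟫` for its
positive roots `δ`. Together with `λ - ρ ∈ C` this gives `‖ρ_μ‖² ≤ ⟪λ - μ, ρ_μ⟫`. Since `μ ⊥ ρ_μ`,
the right-hand side of the inequality is `⟪λ - μ, ρ_μ⟫`, and `‖y‖² ≤ ⟪x, y⟫` forces
`⟪x, y⟫ ≤ ‖x‖²`.
-/

section

variable {E : Type*} [NormedAddCommGroup E] [InnerProductSpace ℝ E]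

noncomputable def rootReflection (α β : E) : E := β - (2 * ⟪β, α⟫ / ⟪α, α⟫) • α

noncomputable def positiveRoots (Δ : Finset E) (v : E) : Finset E :=
  Δ.filter fun α => 0 < ⟪α, v⟫

noncomputable def rho (Δ : Finset E) (v : E) : E := (2 : ℝ)⁻¹ • ∑ α ∈ positiveRoots Δ v, α

section Reflection

variable {α : E}

lemma inner_rootReflection_left (β x : E) :
    ⟪rootReflection α β, x⟫ = ⟪β, x⟫ - 2 * ⟪β, α⟫ / ⟪α, α⟫ * ⟪α, x⟫ := by
  rw [rootReflection, inner_sub_left, real_inner_smul_left]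

lemma inner_rootReflection_self (hα : α ≠ 0) (β : E) : ⟪rootReflection α β, α⟫ = -⟪β, α⟫ := by
  have : ⟪α, α⟫ ≠ 0 := inner_self_ne_zero.2 hα
  rw [inner_rootReflection_left]
  field_simp
  ring

lemma rootReflection_rootReflection (hα : α ≠ 0) (β : E) :
    rootReflection α (rootReflection α β) = β := by
  have : ⟪α, α⟫ ≠ 0 := inner_self_ne_zero.2 hα
  rw [rootReflection, inner_rootReflection_self hα, rootReflection]
  match_scalars <;> field_simp
  ring

lemma rootReflection_self (hα : α ≠ 0) : rootReflection α α = -α := by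
  have : ⟪α, α⟫ ≠ 0 := inner_self_ne_zero.2 hα
  rw [rootReflection, mul_div_assoc, div_self this]
  module

lemma rootReflection_neg (β : E) : rootReflection α (-β) = -rootReflection α β := by
  simp only [rootReflection, inner_neg_left]
  module

def ReflectionClosed (Δ : Finset E) : Prop := ∀ α ∈ Δ, ∀ β ∈ Δ, rootReflection α β ∈ Δ

end Reflection

section PositiveRoots

variable {Δ : Finset E} {v α β : E}

lemma mem_positiveRoots : α ∈ positiveRoots Δ v ↔ α ∈ Δ ∧ 0 < ⟪α, v⟫ := mem_filter

lemma ne_zero_of_mem_positiveRoots (hα : α ∈ positiveRoots Δ v) : α ≠ 0 := by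
  rintro rfl
  simp [mem_positiveRoots] at hα

lemma neg_notMem_positiveRoots (hα : α ∈ positiveRoots Δ v) : -α ∉ positiveRoots Δ v := by
  rw [mem_positiveRoots, inner_neg_left]
  exact fun h => (neg_pos.1 h.2).not_gt (mem_positiveRoots.1 hα).2

lemma neg_mem_positiveRoots_of_notMem (hrefl : ReflectionClosed Δ) (hv : ∀ α ∈ Δ, ⟪α, v⟫ ≠ 0)
    (hα : α ∈ Δ) (hαP : α ∉ positiveRoots Δ v) : -α ∈ positiveRoots Δ v := by
  have hα0 : α ≠ 0 := by rintro rfl; simpa using hv 0 hα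
  have hneg : -α ∈ Δ := rootReflection_self hα0 ▸ hrefl α hα α hα
  have hαv : ⟪α, v⟫ < 0 := (not_lt.1 fun h => hαP (mem_positiveRoots.2 ⟨hα, h⟩)).lt_of_ne (hv α hα)
  rw [mem_positiveRoots, inner_neg_left]
  exact ⟨hneg, neg_pos.2 hαv⟩

lemma inner_rho_nonneg_of_forall {x : E} (h : ∀ β ∈ positiveRoots Δ v, 0 ≤ ⟪x, β⟫) :
    0 ≤ ⟪x, rho Δ v⟫ := by
  rw [rho, real_inner_smul_right, inner_sum]
  exact mul_nonneg (by norm_num) (sum_nonneg h)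

lemma inner_rho_eq_zero_of_forall {x : E} (h : ∀ β ∈ positiveRoots Δ v, ⟪x, β⟫ = 0) :
    ⟪x, rho Δ v⟫ = 0 := by
  rw [rho, real_inner_smul_right, inner_sum, sum_eq_zero h, mul_zero]

noncomputable def positiveReflection [DecidableEq E] (Δ : Finset E) (v α β : E) : E :=
  if rootReflection α β ∈ positiveRoots Δ v then rootReflection α β else -rootReflection α β

lemma positiveReflection_mem [DecidableEq E] (hrefl : ReflectionClosed Δ) (hv : ∀ α ∈ Δ, ⟪α, v⟫ ≠ 0)
    (hα : α ∈ positiveRoots Δ v) (hβ : β ∈ positiveRoots Δ v) :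
    positiveReflection Δ v α β ∈ positiveRoots Δ v := by
  unfold positiveReflection
  split_ifs with h
  · exact h
  · exact neg_mem_positiveRoots_of_notMem hrefl hv
      (hrefl α (mem_positiveRoots.1 hα).1 β (mem_positiveRoots.1 hβ).1) h

lemma positiveReflection_positiveReflection [DecidableEq E] (hα : α ∈ positiveRoots Δ v)
    (hβ : β ∈ positiveRoots Δ v) : positiveReflection Δ v α (positiveReflection Δ v α β) = β := by
  have hα0 := ne_zero_of_mem_positiveRoots hα
  unfold positiveReflection
  split_ifs with h h' h' <;>
    simp only [rootReflection_neg, rootReflection_rootReflection hα0, neg_neg] at h' ⊢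
  · exact absurd hβ h'
  · exact absurd h' (neg_notMem_positiveRoots hβ)

lemma inner_positiveReflection_self [DecidableEq E] (hα : α ≠ 0) (β : E) :
    ⟪positiveReflection Δ v α β, α⟫ =
      if rootReflection α β ∈ positiveRoots Δ v then -⟪β, α⟫ else ⟪β, α⟫ := by
  unfold positiveReflection
  split_ifs <;> simp [inner_neg_left, inner_rootReflection_self hα]

lemma sum_inner_positiveRoots_eq [DecidableEq E] (hrefl : ReflectionClosed Δ)
    (hv : ∀ α ∈ Δ, ⟪α, v⟫ ≠ 0) (hα : α ∈ positiveRoots Δ v) :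
    ∑ β ∈ positiveRoots Δ v, ⟪β, α⟫ =
      ∑ β ∈ (positiveRoots Δ v).filter (rootReflection α · ∉ positiveRoots Δ v), ⟪β, α⟫ := by
  set P := positiveRoots Δ v
  have hreindex : ∑ β ∈ P, ⟪β, α⟫ = ∑ β ∈ P, ⟪positiveReflection Δ v α β, α⟫ :=
    sum_nbij' (positiveReflection Δ v α) (positiveReflection Δ v α)
      (fun β hβ => positiveReflection_mem hrefl hv hα hβ)
      (fun β hβ => positiveReflection_mem hrefl hv hα hβ)
      (fun β hβ => positiveReflection_positiveReflection hα hβ)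
      (fun β hβ => positiveReflection_positiveReflection hα hβ)
      (fun β hβ => by rw [positiveReflection_positiveReflection hα hβ])
  have hsplit := sum_filter_add_sum_filter_not P (rootReflection α · ∈ P) (⟪·, α⟫)
  rw [sum_congr rfl fun β _ =>
    inner_positiveReflection_self (ne_zero_of_mem_positiveRoots hα) β] at hreindex
  rw [sum_ite, sum_neg_distrib] at hreindex
  linarith

lemma inner_pos_of_rootReflection_notMem (hrefl : ReflectionClosed Δ)
    (hv : ∀ α ∈ Δ, ⟪α, v⟫ ≠ 0) (hα : α ∈ positiveRoots Δ v) (hβ : β ∈ positiveRoots Δ v)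
    (h : rootReflection α β ∉ positiveRoots Δ v) : 0 < ⟪β, α⟫ := by
  have hαα : 0 < ⟪α, α⟫ := real_inner_self_pos.2 (ne_zero_of_mem_positiveRoots hα)
  rw [mem_positiveRoots] at hα hβ
  have hsΔ := hrefl α hα.1 β hβ.1
  have hsv : ⟪rootReflection α β, v⟫ < 0 :=
    (not_lt.1 fun hpos => h (mem_positiveRoots.2 ⟨hsΔ, hpos⟩)).lt_of_ne (hv _ hsΔ)
  rw [inner_rootReflection_left] at hsv
  have hcoeff : 0 < 2 * ⟪β, α⟫ / ⟪α, α⟫ := pos_of_mul_pos_left (by linarith [hβ.2]) hα.2.le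
  have := (div_pos_iff_of_pos_right hαα).1 hcoeff
  linarith

lemma inner_rho_le_of_subset {Δ' : Finset E} (hsub : Δ' ⊆ Δ) (hrefl' : ReflectionClosed Δ')
    (hrefl : ReflectionClosed Δ) (hv : ∀ α ∈ Δ, ⟪α, v⟫ ≠ 0) (hα : α ∈ positiveRoots Δ' v) :
    ⟪rho Δ' v, α⟫ ≤ ⟪rho Δ v, α⟫ := by
  classical
  have hPsub : positiveRoots Δ' v ⊆ positiveRoots Δ v := filter_subset_filter _ hsub
  have hv' : ∀ α ∈ Δ', ⟪α, v⟫ ≠ 0 := fun α h => hv α (hsub h)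
  simp only [rho, real_inner_smul_left, sum_inner]
  rw [sum_inner_positiveRoots_eq hrefl' hv' hα, sum_inner_positiveRoots_eq hrefl hv (hPsub hα)]
  refine mul_le_mul_of_nonneg_left ?_ (by norm_num)
  refine sum_le_sum_of_subset_of_nonneg ?_ fun β hβ _ => ?_
  · intro β hβ
    rw [mem_filter] at hβ ⊢
    refine ⟨hPsub hβ.1, fun hs => hβ.2 (mem_positiveRoots.2 ⟨?_, (mem_positiveRoots.1 hs).2⟩)⟩
    exact hrefl' α (mem_positiveRoots.1 hα).1 β (mem_positiveRoots.1 hβ.1).1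
  · exact (inner_pos_of_rootReflection_notMem hrefl hv (hPsub hα) (mem_filter.1 hβ).1
      (mem_filter.1 hβ).2).le

end PositiveRoots

lemma ReflectionClosed.filter_inner_eq_zero {Δ : Finset E} (h : ReflectionClosed Δ) (μ : E) :
    ReflectionClosed (Δ.filter (⟪·, μ⟫ = 0)) := by
  intro α hα β hβ
  rw [mem_filter] at hα hβ ⊢
  refine ⟨h α hα.1 β hβ.1, ?_⟩
  rw [inner_rootReflection_left, hα.2, hβ.2, mul_zero, sub_zero]

lemma inner_le_norm_sq_of_norm_sq_le_inner {x y : E} (h : ‖y‖ ^ 2 ≤ ⟪x, y⟫) :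
    ⟪x, y⟫ ≤ ‖x‖ ^ 2 := by
  have := norm_sub_sq_real x y
  nlinarith [sq_nonneg ‖x - y‖]

end

theorem magical_inequality_first_general
    {E : Type*} [NormedAddCommGroup E] [InnerProductSpace ℝ E]
    (Δ : Finset E)
    (hΔrefl : ∀ α ∈ Δ, ∀ β ∈ Δ, β - (2 * ⟪β, α⟫ / ⟪α, α⟫) • α ∈ Δ)
    (v : E) (hv : ∀ α ∈ Δ, ⟪α, v⟫ ≠ 0)
    (Δpos : Finset E) (hΔpos : Δpos = Δ.filter (fun α => 0 < ⟪α, v⟫))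
    (ρ : E) (hρ : ρ = (2 : ℝ)⁻¹ • ∑ α ∈ Δpos, α)    (lam μ : E)
    (hlam : ∀ α ∈ Δpos, 0 ≤ ⟪lam - ρ, α⟫) :
    ‖lam - μ‖ ^ 2 ≥ (2 : ℝ)⁻¹ * ∑ α ∈ Δpos.filter (fun α => ⟪α, μ⟫ = 0), ⟪lam, α⟫ := by
  subst hΔpos hρ
  set Δμ := Δ.filter (⟪·, μ⟫ = 0)
  have hΔμ : ReflectionClosed Δμ := ReflectionClosed.filter_inner_eq_zero hΔrefl μ
  have hsub : positiveRoots Δμ v ⊆ positiveRoots Δ v :=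
    filter_subset_filter _ (filter_subset _ _)
  have hμ : ⟪μ, rho Δμ v⟫ = 0 := inner_rho_eq_zero_of_forall fun β hβ => by
    rw [real_inner_comm]; exact (mem_filter.1 (mem_positiveRoots.1 hβ).1).2
  have hlam' : 0 ≤ ⟪lam - rho Δ v, rho Δμ v⟫ :=
    inner_rho_nonneg_of_forall fun β hβ => hlam β (hsub hβ)
  have hρ : 0 ≤ ⟪rho Δ v - rho Δμ v, rho Δμ v⟫ := inner_rho_nonneg_of_forall fun β hβ => by
    rw [inner_sub_left, sub_nonneg]
    exact inner_rho_le_of_subset (filter_subset _ _) hΔμ hΔrefl hv hβ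
  have hkey : ‖rho Δμ v‖ ^ 2 ≤ ⟪lam - μ, rho Δμ v⟫ := by
    rw [← real_inner_self_eq_norm_sq]
    simp only [inner_sub_left] at hμ hlam' hρ ⊢
    linarith
  calc (2 : ℝ)⁻¹ * ∑ α ∈ (Δ.filter (fun α => 0 < ⟪α, v⟫)).filter (fun α => ⟪α, μ⟫ = 0), ⟪lam, α⟫
      = ⟪lam - μ, rho Δμ v⟫ := by
        rw [inner_sub_left, hμ, sub_zero, rho, real_inner_smul_right, inner_sum, positiveRoots,
          filter_comm]
    _ ≤ ‖lam - μ‖ ^ 2 := inner_le_norm_sq_of_norm_sq_le_inner hkey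

theorem magical_inequality_first
    {E : Type*} [NormedAddCommGroup E] [InnerProductSpace ℝ E] [FiniteDimensional ℝ E]
    (Δ : Finset E)
    (hΔ0 : (0 : E) ∉ Δ)
    (hΔred : ∀ α ∈ Δ, ∀ t : ℝ, t • α ∈ Δ → t = 1 ∨ t = -1)
    (hΔrefl : ∀ α ∈ Δ, ∀ β ∈ Δ, β - (2 * ⟪β, α⟫ / ⟪α, α⟫) • α ∈ Δ)
    (hΔcrys : ∀ α ∈ Δ, ∀ β ∈ Δ, ∃ n : ℤ, 2 * ⟪β, α⟫ / ⟪α, α⟫ = (n : ℝ))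
    (v : E) (hv : ∀ α ∈ Δ, ⟪α, v⟫ ≠ 0)
    (Δpos : Finset E) (hΔpos : Δpos = Δ.filter (fun α => 0 < ⟪α, v⟫))
    (ρ : E) (hρ : ρ = (2 : ℝ)⁻¹ • ∑ α ∈ Δpos, α)    (lam μ : E)
    (hlam : ∀ α ∈ Δpos, 0 ≤ ⟪lam - ρ, α⟫) :
    ‖lam - μ‖ ^ 2 ≥ (2 : ℝ)⁻¹ * ∑ α ∈ Δpos.filter (fun α => ⟪α, μ⟫ = 0), ⟪lam, α⟫ :=
  magical_inequality_first_general Δ hΔrefl v hv Δpos hΔpos ρ hρ lam μ hlam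
end

section
/- Suppose λ ∈ ρ + C (λ lies in the shifted Weyl chamber) and μ ∈ E. Then (1/2)·Σ_{α ∈ Δ⁺, (α,μ)=0} (λ,α) ≥ ‖ρ_μ‖². -/
open scoped RealInnerProductSpace
open Finset
theorem magical_inequality_second
    {E : Type*} [NormedAddCommGroup E] [InnerProductSpace ℝ E] [FiniteDimensional ℝ E]
    (Δ : Finset E)
    (hΔ0 : (0 : E) ∉ Δ)
    (hΔred : ∀ α ∈ Δ, ∀ t : ℝ, t • α ∈ Δ → t = 1 ∨ t = -1)
    (hΔrefl : ∀ α ∈ Δ, ∀ β ∈ Δ, β - (2 * ⟪β, α⟫ / ⟪α, α⟫) • α ∈ Δ)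
    (hΔcrys : ∀ α ∈ Δ, ∀ β ∈ Δ, ∃ n : ℤ, 2 * ⟪β, α⟫ / ⟪α, α⟫ = (n : ℝ))
    (v : E) (hv : ∀ α ∈ Δ, ⟪α, v⟫ ≠ 0)
    (Δpos : Finset E) (hΔpos : Δpos = Δ.filter (fun α => 0 < ⟪α, v⟫))
    (ρ : E) (hρ : ρ = (2 : ℝ)⁻¹ • ∑ α ∈ Δpos, α)    (lam μ : E)
    (hlam : ∀ α ∈ Δpos, 0 ≤ ⟪lam - ρ, α⟫)
    (ρμ : E) (hρμ : ρμ = (2 : ℝ)⁻¹ • ∑ α ∈ Δpos.filter (fun α => ⟪α, μ⟫ = 0), α) :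
    (2 : ℝ)⁻¹ * ∑ α ∈ Δpos.filter (fun α => ⟪α, μ⟫ = 0), ⟪lam, α⟫ ≥ ‖ρμ‖ ^ 2 := by
  classical
  set S : Finset E := Δpos.filter (fun α => ⟪α, μ⟫ = 0) with hS
  set P : Finset E := Δpos.filter (fun α => ¬ ⟪α, μ⟫ = 0) with hP
  have hposΔ : ∀ α ∈ Δpos, α ∈ Δ := by
    intro α hα; rw [hΔpos] at hα; exact (mem_filter.1 hα).1
  have hposv : ∀ α ∈ Δpos, 0 < ⟪α, v⟫ := by
    intro α hα; rw [hΔpos] at hα; exact (mem_filter.1 hα).2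
  -- ρ - ρμ = ½ • ∑_{β ∈ P} β
  have hsum : ∑ α ∈ S, (α : E) + ∑ α ∈ P, α = ∑ α ∈ Δpos, α :=
    Finset.sum_filter_add_sum_filter_not Δpos _ _
  have hdiff : ρ - ρμ = (2 : ℝ)⁻¹ • ∑ β ∈ P, β := by
    rw [hρ, hρμ, ← smul_sub, ← hsum]
    congr 1
    abel
  -- key positivity
  have key : ∀ α ∈ S, 0 ≤ ∑ β ∈ P, ⟪β, α⟫ := by
    intro α hαS
    have hαpos : α ∈ Δpos := (mem_filter.1 hαS).1
    have hαμ : ⟪α, μ⟫ = 0 := (mem_filter.1 hαS).2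
    have hαΔ : α ∈ Δ := hposΔ α hαpos
    have hαv : 0 < ⟪α, v⟫ := hposv α hαpos
    have hα0 : α ≠ 0 := fun h => hΔ0 (h ▸ hαΔ)
    have hαα : 0 < ⟪α, α⟫ := by
      rw [real_inner_self_eq_norm_sq]
      exact pow_pos (norm_pos_iff.2 hα0) 2
    set g : E → E := fun β => β - (2 * ⟪β, α⟫ / ⟪α, α⟫) • α with hg
    have hginner : ∀ β : E, ⟪g β, α⟫ = -⟪β, α⟫ := by
      intro β
      rw [hg]
      simp only [inner_sub_left, real_inner_smul_left]
      field_simp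
      ring
    have hgg : ∀ β : E, g (g β) = β := by
      intro β
      have h1 : (2 * ⟪g β, α⟫ / ⟪α, α⟫) = -(2 * ⟪β, α⟫ / ⟪α, α⟫) := by
        rw [hginner]; ring
      show g β - (2 * ⟪g β, α⟫ / ⟪α, α⟫) • α = β
      rw [h1, hg]; simp [sub_eq_add_neg, neg_smul]
    have hgμ : ∀ β : E, ⟪g β, μ⟫ = ⟪β, μ⟫ := by
      intro β
      rw [hg]
      simp [inner_sub_left, real_inner_smul_left, hαμ]
    have hgΔ : ∀ β ∈ Δ, g β ∈ Δ := fun β hβ => hΔrefl α hαΔ β hβ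
    -- split P by whether g β stays in P
    have hsplit : ∑ β ∈ P, ⟪β, α⟫ =
        ∑ β ∈ P.filter (fun β => g β ∈ P), ⟪β, α⟫ +
        ∑ β ∈ P.filter (fun β => ¬ g β ∈ P), ⟪β, α⟫ :=
      (Finset.sum_filter_add_sum_filter_not P _ _).symm
    have h1 : ∑ β ∈ P.filter (fun β => g β ∈ P), ⟪β, α⟫ = 0 := by
      refine Finset.sum_involution (fun β _ => g β) ?_ ?_ ?_ ?_
      · intro β _; rw [hginner]; ring
      · intro β _ hne h
        apply hne
        have : (2 * ⟪β, α⟫ / ⟪α, α⟫) • α = 0 := by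
          have := sub_eq_self.1 h
          exact this
        rcases smul_eq_zero.1 this with h' | h'
        · rcases div_eq_zero_iff.1 h' with h'' | h''
          · linarith
          · exact absurd h'' (ne_of_gt hαα)
        · exact absurd h' hα0
      · intro β hβ
        have hβP : β ∈ P := (mem_filter.1 hβ).1
        have hgβP : g β ∈ P := (mem_filter.1 hβ).2
        refine mem_filter.2 ⟨hgβP, ?_⟩
        rw [hgg]; exact hβP
      · intro β _; exact hgg β
    have h2 : 0 ≤ ∑ β ∈ P.filter (fun β => ¬ g β ∈ P), ⟪β, α⟫ := by
      refine Finset.sum_nonneg ?_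
      intro β hβ
      have hβP : β ∈ P := (mem_filter.1 hβ).1
      have hgβnP : ¬ g β ∈ P := (mem_filter.1 hβ).2
      have hβpos : β ∈ Δpos := (mem_filter.1 hβP).1
      have hβμ : ¬ ⟪β, μ⟫ = 0 := (mem_filter.1 hβP).2
      have hβΔ : β ∈ Δ := hposΔ β hβpos
      have hβv : 0 < ⟪β, v⟫ := hposv β hβpos
      have hgβΔ : g β ∈ Δ := hgΔ β hβΔ
      -- g β ∉ Δpos since its μ-inner is nonzero
      have hgβnpos : g β ∉ Δpos := by
        intro h
        exact hgβnP (mem_filter.2 ⟨h, by rw [hgμ]; exact hβμ⟩)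
      have hgβv : ⟪g β, v⟫ < 0 := by
        have hne := hv _ hgβΔ
        have : ¬ 0 < ⟪g β, v⟫ := by
          intro h
          exact hgβnpos (by rw [hΔpos]; exact mem_filter.2 ⟨hgβΔ, h⟩)
        cases lt_or_eq_of_le (not_lt.1 this) with
        | inl h => exact h
        | inr h => exact absurd h hne
      have hexp : ⟪g β, v⟫ = ⟪β, v⟫ - (2 * ⟪β, α⟫ / ⟪α, α⟫) * ⟪α, v⟫ := by
        rw [hg]; simp [inner_sub_left, real_inner_smul_left]
      rw [hexp] at hgβv
      -- deduce 0 ≤ ⟪β, α⟫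
      by_contra hneg
      push_neg at hneg
      have hc : 2 * ⟪β, α⟫ / ⟪α, α⟫ < 0 := div_neg_of_neg_of_pos (by linarith) hαα
      linarith [mul_neg_of_neg_of_pos hc hαv]
    rw [hsplit, h1]; linarith
  -- main computation
  have hρμS : ρμ = (2 : ℝ)⁻¹ • ∑ α ∈ S, α := by rw [hρμ]
  have hinnS : ∀ x : E, ⟪x, ρμ⟫ = (2 : ℝ)⁻¹ * ∑ α ∈ S, ⟪x, α⟫ := by
    intro x
    rw [hρμS, real_inner_smul_right, inner_sum]
  have h3 : 0 ≤ ⟪lam - ρ, ρμ⟫ := by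
    rw [hinnS]
    have : 0 ≤ ∑ α ∈ S, ⟪lam - ρ, α⟫ :=
      Finset.sum_nonneg fun α hα => hlam α (mem_filter.1 hα).1
    positivity
  have h4 : 0 ≤ ⟪ρ - ρμ, ρμ⟫ := by
    rw [hinnS]
    have : 0 ≤ ∑ α ∈ S, ⟪ρ - ρμ, α⟫ := by
      refine Finset.sum_nonneg fun α hα => ?_
      rw [hdiff, real_inner_smul_left, sum_inner]
      have := key α hα
      positivity
    positivity
  have hid : ⟪lam, ρμ⟫ = ⟪lam - ρ, ρμ⟫ + ⟪ρ - ρμ, ρμ⟫ + ⟪ρμ, ρμ⟫ := by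
    simp only [inner_sub_left]; ring
  have hnorm : ‖ρμ‖ ^ 2 = ⟪ρμ, ρμ⟫ := (real_inner_self_eq_norm_sq ρμ).symm
  have hlhs : (2 : ℝ)⁻¹ * ∑ α ∈ S, ⟪lam, α⟫ = ⟪lam, ρμ⟫ := (hinnS lam).symm
  rw [ge_iff_le, hnorm, hlhs, hid]
  linarith
end

section
/- (The magical inequality.) Suppose λ ∈ ρ + C and μ ∈ E. Then ‖λ − μ‖ ≥ ‖ρ_μ‖, and equality holds if and only if μ ∈ C and λ − ρ(λ) = μ − ρ(μ). -/
open scoped RealInnerProductSpace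
open Finset
set_option maxHeartbeats 1000000 in
theorem magical_inequality
    {E : Type*} [NormedAddCommGroup E] [InnerProductSpace ℝ E] [FiniteDimensional ℝ E]
    (Δ : Finset E)
    (hΔ0 : (0 : E) ∉ Δ)
    (hΔred : ∀ α ∈ Δ, ∀ t : ℝ, t • α ∈ Δ → t = 1 ∨ t = -1)
    (hΔrefl : ∀ α ∈ Δ, ∀ β ∈ Δ, β - (2 * ⟪β, α⟫ / ⟪α, α⟫) • α ∈ Δ)
    (hΔcrys : ∀ α ∈ Δ, ∀ β ∈ Δ, ∃ n : ℤ, 2 * ⟪β, α⟫ / ⟪α, α⟫ = (n : ℝ))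
    (v : E) (hv : ∀ α ∈ Δ, ⟪α, v⟫ ≠ 0)
    (Δpos : Finset E) (hΔpos : Δpos = Δ.filter (fun α => 0 < ⟪α, v⟫))
    (ρ : E) (hρ : ρ = (2 : ℝ)⁻¹ • ∑ α ∈ Δpos, α)    (lam μ : E)
    (hlam : ∀ α ∈ Δpos, 0 ≤ ⟪lam - ρ, α⟫)
    (ρμ : E) (hρμ : ρμ = (2 : ℝ)⁻¹ • ∑ α ∈ Δpos.filter (fun α => ⟪α, μ⟫ = 0), α)
    (ρlam : E) (hρlam : ρlam = (2 : ℝ)⁻¹ • ∑ α ∈ Δ.filter (fun α => 0 < ⟪α, lam⟫), α)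
    (ρμD : E) (hρμD : ρμD = (2 : ℝ)⁻¹ • ∑ α ∈ Δ.filter (fun α => 0 < ⟪α, μ⟫), α) :
    ‖lam - μ‖ ≥ ‖ρμ‖ ∧
      (‖lam - μ‖ = ‖ρμ‖ ↔ (∀ α ∈ Δpos, 0 ≤ ⟪μ, α⟫) ∧ lam - ρlam = μ - ρμD) := by
  classical
  -- basic membership facts
  have hmem : ∀ α ∈ Δpos, α ∈ Δ ∧ 0 < ⟪α, v⟫ := by
    intro α hα; rw [hΔpos, mem_filter] at hα; exact hα
  have hmem' : ∀ α, α ∈ Δ → 0 < ⟪α, v⟫ → α ∈ Δpos := by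
    intro α h1 h2; rw [hΔpos, mem_filter]; exact ⟨h1, h2⟩
  have hne0 : ∀ γ ∈ Δ, γ ≠ 0 := fun γ hγ h => hΔ0 (h ▸ hγ)
  have hgg : ∀ γ ∈ Δ, (0:ℝ) < ⟪γ, γ⟫ := by
    intro γ hγ
    have h1 : (0:ℝ) ≤ ⟪γ, γ⟫ := real_inner_self_nonneg
    have h2 : ⟪γ, γ⟫ ≠ 0 := fun h => hne0 γ hγ (inner_self_eq_zero.mp h)
    exact lt_of_le_of_ne h1 (Ne.symm h2)
  have hneg : ∀ α ∈ Δ, -α ∈ Δ := by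
    intro α hα
    have := hΔrefl α hα α hα
    have h2 : 2 * ⟪α, α⟫ / ⟪α, α⟫ = (2:ℝ) := by
      rw [mul_div_assoc, div_self (hgg α hα).ne', mul_one]
    rw [h2] at this
    have h3 : α - (2:ℝ) • α = -α := by
      rw [two_smul]; abel
    rwa [h3] at this
  have hnotpos : ∀ α ∈ Δ, α ∉ Δpos → ⟪α, v⟫ < 0 := by
    intro α hα hn
    rcases lt_trichotomy (⟪α, v⟫) 0 with h | h | h
    · exact h
    · exact absurd h (hv α hα)
    · exact absurd (hmem' α hα h) hn
  -- the reflection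
  set s : E → E → E := fun γ β => β - (2 * ⟪β, γ⟫ / ⟪γ, γ⟫) • γ with hs
  have hsmem : ∀ γ ∈ Δ, ∀ β ∈ Δ, s γ β ∈ Δ := fun γ hγ β hβ => hΔrefl γ hγ β hβ
  have hsv : ∀ γ β x : E, ⟪s γ β, x⟫ = ⟪β, x⟫ - (2 * ⟪β, γ⟫ / ⟪γ, γ⟫) * ⟪γ, x⟫ := by
    intro γ β x
    simp [hs, inner_sub_left, real_inner_smul_left]
  have hsg : ∀ γ ∈ Δ, ∀ β : E, ⟪s γ β, γ⟫ = -⟪β, γ⟫ := by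
    intro γ hγ β
    rw [hsv]
    have h := (hgg γ hγ).ne'
    field_simp
    ring
  have hss : ∀ γ ∈ Δ, ∀ β : E, s γ (s γ β) = β := by
    intro γ hγ β
    have h1 := hsg γ hγ β
    show s γ β - (2 * ⟪s γ β, γ⟫ / ⟪γ, γ⟫) • γ = β
    rw [h1]
    have h2 : 2 * -⟪β, γ⟫ / ⟪γ, γ⟫ = -(2 * ⟪β, γ⟫ / ⟪γ, γ⟫) := by ring
    rw [h2, neg_smul, sub_neg_eq_add]
    show β - (2 * ⟪β, γ⟫ / ⟪γ, γ⟫) • γ + (2 * ⟪β, γ⟫ / ⟪γ, γ⟫) • γ = β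
    abel
  -- key sum lemma
  have key : ∀ γ ∈ Δpos, ∀ T ⊆ Δpos,
      (∀ β ∈ T, s γ β ∈ Δpos → s γ β ∈ T) →
      (0 ≤ ∑ β ∈ T, ⟪β, γ⟫ ∧ ((∑ β ∈ T, ⟪β, γ⟫) = 0 → ∀ β ∈ T, s γ β ∈ Δpos)) := by
    intro γ hγ T hT hstab
    obtain ⟨hγΔ, hγv⟩ := hmem γ hγ
    -- terms with reflection outside Δpos are positive
    have hterm : ∀ β ∈ T, s γ β ∉ Δpos → 0 < ⟪β, γ⟫ := by
      intro β hβ hout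
      obtain ⟨hβΔ, hβv⟩ := hmem β (hT hβ)
      have hsΔ : s γ β ∈ Δ := hsmem γ hγΔ β hβΔ
      have hsvneg : ⟪s γ β, v⟫ < 0 := hnotpos _ hsΔ hout
      rw [hsv] at hsvneg
      have hggpos := hgg γ hγΔ
      have hkey2 : 2 * ⟪β, γ⟫ = (2 * ⟪β, γ⟫ / ⟪γ, γ⟫) * ⟪γ, γ⟫ := by
        field_simp
      have hc : 0 < 2 * ⟪β, γ⟫ / ⟪γ, γ⟫ := by
        by_contra hc
        push_neg at hc
        nlinarith [mul_nonneg (neg_nonneg.mpr hc) hγv.le]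
      nlinarith [mul_pos hc hggpos]
    have hsplit := Finset.sum_filter_add_sum_filter_not T (fun β => s γ β ∈ Δpos)
      (fun β => (⟪β, γ⟫ : ℝ))
    have hzero : ∑ β ∈ T.filter (fun β => s γ β ∈ Δpos), ⟪β, γ⟫ = 0 := by
      apply Finset.sum_involution (fun β _ => s γ β)
      · intro β hβ
        rw [mem_filter] at hβ
        rw [hsg γ hγΔ β]; ring
      · intro β hβ hne
        intro h
        apply hne
        have : ⟪s γ β, γ⟫ = ⟪β, γ⟫ := by rw [h]
        rw [hsg γ hγΔ β] at this
        linarith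
      · intro β hβ
        rw [mem_filter] at hβ ⊢
        refine ⟨hstab β hβ.1 hβ.2, ?_⟩
        rw [hss γ hγΔ β]
        exact hT hβ.1
      · intro β hβ
        exact hss γ hγΔ β
    constructor
    · rw [← hsplit, hzero, zero_add]
      apply Finset.sum_nonneg
      intro β hβ
      rw [mem_filter] at hβ
      exact le_of_lt (hterm β hβ.1 hβ.2)
    · intro hsum β hβ
      by_contra hout
      have hne : (T.filter (fun β => s γ β ∉ Δpos)).Nonempty := ⟨β, by
        rw [mem_filter]; exact ⟨hβ, hout⟩⟩
      have hpos : 0 < ∑ β ∈ T.filter (fun β => s γ β ∉ Δpos), ⟪β, γ⟫ := by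
        apply Finset.sum_pos _ hne
        intro x hx
        rw [mem_filter] at hx
        exact hterm x hx.1 hx.2
      rw [← hsplit, hzero, zero_add] at hsum
      rw [hsum] at hpos
      exact lt_irrefl 0 hpos
  -- positivity of ρ on positive roots
  have hρpos : ∀ γ ∈ Δpos, 0 < ⟪ρ, γ⟫ := by
    intro γ hγ
    obtain ⟨hγΔ, hγv⟩ := hmem γ hγ
    have hkey := key γ hγ (Δpos.erase γ) (erase_subset _ _) ?_
    · have hsum : ⟪ρ, γ⟫ = (2:ℝ)⁻¹ * ∑ β ∈ Δpos, ⟪β, γ⟫ := by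
        rw [hρ, real_inner_smul_left, sum_inner]
      have herase := Finset.add_sum_erase Δpos (fun β => (⟪β, γ⟫ : ℝ)) hγ
      have := hgg γ hγΔ
      have h1 := hkey.1
      rw [hsum]
      nlinarith
    · intro β hβ hmem2
      rw [mem_erase] at hβ ⊢
      refine ⟨?_, hmem2⟩
      intro heq
      have : β = s γ γ := by
        rw [← hss γ hγΔ β]
        exact congrArg (s γ) heq
      have hsγγ : s γ γ = -γ := by
        show γ - (2 * ⟪γ, γ⟫ / ⟪γ, γ⟫) • γ = -γ
        have h2 : 2 * ⟪γ, γ⟫ / ⟪γ, γ⟫ = (2:ℝ) := by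
          rw [mul_div_assoc, div_self (hgg γ hγΔ).ne', mul_one]
        rw [h2, two_smul]; abel
      rw [hsγγ] at this
      obtain ⟨hβΔ, hβv⟩ := hmem β hβ.2
      rw [this] at hβv
      rw [inner_neg_left] at hβv
      linarith
  have hlampos : ∀ γ ∈ Δpos, 0 < ⟪lam, γ⟫ := by
    intro γ hγ
    have h1 := hlam γ hγ
    have h2 := hρpos γ hγ
    have h3 : ⟪lam, γ⟫ = ⟪lam - ρ, γ⟫ + ⟪ρ, γ⟫ := by
      rw [inner_sub_left]; ring
    linarith
  -- ρlam = ρ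
  have hρlam_eq : ρlam = ρ := by
    have hset : Δ.filter (fun α => 0 < ⟪α, lam⟫) = Δpos := by
      apply Finset.ext
      intro α
      rw [mem_filter]
      constructor
      · rintro ⟨hαΔ, hαl⟩
        by_contra hn
        have h1 : ⟪α, v⟫ < 0 := hnotpos α hαΔ hn
        have h2 : -α ∈ Δpos := hmem' (-α) (hneg α hαΔ) (by rw [inner_neg_left]; linarith)
        have h3 := hlampos (-α) h2
        rw [real_inner_comm, inner_neg_left] at h3
        linarith
      · intro hα
        refine ⟨(hmem α hα).1, ?_⟩
        rw [real_inner_comm]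
        exact hlampos α hα
    rw [hρlam, hset, ← hρ]
  -- the split of Δpos by orthogonality to μ
  set Z := Δpos.filter (fun α => ⟪α, μ⟫ = 0) with hZ
  set Zc := Δpos.filter (fun α => ¬ ⟪α, μ⟫ = 0) with hZc
  have hρμZ : ρμ = (2:ℝ)⁻¹ • ∑ α ∈ Z, α := hρμ
  have hsumsplit : (∑ α ∈ Z, α) + (∑ α ∈ Zc, α) = ∑ α ∈ Δpos, α :=
    Finset.sum_filter_add_sum_filter_not Δpos (fun α => ⟪α, μ⟫ = 0) _
  have hdiff : ρ - ρμ = (2:ℝ)⁻¹ • ∑ α ∈ Zc, α := by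
    rw [hρ, hρμZ, ← hsumsplit, smul_add]
    abel
  -- ⟪μ, ρμ⟫ = 0
  have hμρμ : ⟪μ, ρμ⟫ = 0 := by
    rw [hρμZ, real_inner_smul_right, inner_sum]
    have : ∑ α ∈ Z, ⟪μ, α⟫ = 0 := by
      apply Finset.sum_eq_zero
      intro α hα
      rw [hZ, mem_filter] at hα
      rw [real_inner_comm]
      exact hα.2
    rw [this, mul_zero]
  -- A ≥ 0
  have hA : 0 ≤ ⟪lam - ρ, ρμ⟫ := by
    rw [hρμZ, real_inner_smul_right, inner_sum]
    have h : 0 ≤ ∑ α ∈ Z, ⟪lam - ρ, α⟫ := by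
      apply Finset.sum_nonneg
      intro α hα
      rw [hZ, mem_filter] at hα
      exact hlam α hα.1
    positivity
  -- B ≥ 0 and its equality case
  have hBγ : ∀ γ ∈ Z, (0 ≤ ∑ β ∈ Zc, ⟪β, γ⟫ ∧
      ((∑ β ∈ Zc, ⟪β, γ⟫) = 0 → ∀ β ∈ Zc, s γ β ∈ Δpos)) := by
    intro γ hγ
    rw [hZ, mem_filter] at hγ
    apply key γ hγ.1 Zc (filter_subset _ _)
    intro β hβ hsβ
    rw [hZc, mem_filter] at hβ ⊢
    refine ⟨hsβ, ?_⟩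
    rw [hsv, hγ.2]
    simpa using hβ.2
  have hinner2 : ∀ γ : E, ⟪ρ - ρμ, γ⟫ = (2:ℝ)⁻¹ * ∑ β ∈ Zc, ⟪β, γ⟫ := by
    intro γ
    rw [hdiff, real_inner_smul_left, sum_inner]
  have hBform : ⟪ρ - ρμ, ρμ⟫ = (2:ℝ)⁻¹ * ((2:ℝ)⁻¹ * ∑ γ ∈ Z, ∑ β ∈ Zc, ⟪β, γ⟫) := by
    obtain ⟨x, hx⟩ : ∃ x, x = ρ - ρμ := ⟨_, rfl⟩
    rw [← hx, hρμZ, real_inner_smul_right, inner_sum]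
    simp only [hx, hinner2]
    rw [← Finset.mul_sum]
  have hB : 0 ≤ ⟪ρ - ρμ, ρμ⟫ := by
    rw [hBform]
    have h : 0 ≤ ∑ γ ∈ Z, ∑ β ∈ Zc, ⟪β, γ⟫ :=
      Finset.sum_nonneg (fun γ hγ => (hBγ γ hγ).1)
    positivity
  -- the norm identity
  have e1 : lam - μ - ρμ + ρμ = lam - μ := by abel
  have e2 : ⟪lam - μ - ρμ, ρμ⟫ = ⟪lam - ρ, ρμ⟫ + ⟪ρ - ρμ, ρμ⟫ - ⟪μ, ρμ⟫ := by
    have h : lam - μ - ρμ = (lam - ρ) + (ρ - ρμ) - μ := by abel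
    rw [h, inner_sub_left, inner_add_left]
  have hid := norm_add_sq_real (lam - μ - ρμ) ρμ
  rw [e1, e2, hμρμ] at hid
  -- main inequality on squares
  have hsq : ‖ρμ‖ ^ 2 ≤ ‖lam - μ‖ ^ 2 := by
    nlinarith [sq_nonneg ‖lam - μ - ρμ‖]
  have hineq : ‖lam - μ‖ ≥ ‖ρμ‖ :=
    le_of_pow_le_pow_left₀ two_ne_zero (norm_nonneg _) hsq
  refine ⟨hineq, ?_, ?_⟩
  · -- forward direction of the iff
    intro heq
    have heqsq : ‖lam - μ‖ ^ 2 = ‖ρμ‖ ^ 2 := by rw [heq]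
    have hd0 : lam - μ - ρμ = 0 := by
      have : ‖lam - μ - ρμ‖ ^ 2 = 0 := by nlinarith
      have h2 : ‖lam - μ - ρμ‖ = 0 := by
        nlinarith [norm_nonneg (lam - μ - ρμ)]
      exact norm_eq_zero.mp h2
    have hlμ : lam = μ + ρμ := by
      have := hd0
      rw [sub_eq_zero] at this
      rw [sub_eq_iff_eq_add'] at this
      exact this
    have hB0 : ⟪ρ - ρμ, ρμ⟫ = 0 := by nlinarith
    -- E3
    have hE3 : ∀ γ ∈ Z, ∀ β ∈ Zc, s γ β ∈ Δpos := by
      have hsum0 : ∑ γ ∈ Z, ∑ β ∈ Zc, ⟪β, γ⟫ = 0 := by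
        rw [hBform] at hB0
        nlinarith
      intro γ hγ
      apply (hBγ γ hγ).2
      have := (Finset.sum_eq_zero_iff_of_nonneg
        (fun γ hγ => (hBγ γ hγ).1)).mp hsum0 γ hγ
      exact this
    -- μ ∈ C
    have hC : ∀ α ∈ Δpos, 0 ≤ ⟪μ, α⟫ := by
      by_contra hnc
      push_neg at hnc
      set Bad := Δpos.filter (fun α => ⟪μ, α⟫ < 0) with hBad
      have hBne : Bad.Nonempty := by
        obtain ⟨α, hα, hlt⟩ := hnc
        exact ⟨α, by rw [hBad, mem_filter]; exact ⟨hα, hlt⟩⟩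
      obtain ⟨α, hαB, hαmin⟩ := Finset.exists_min_image Bad (fun α => ⟪α, v⟫) hBne
      rw [hBad, mem_filter] at hαB
      obtain ⟨hαp, hαμ⟩ := hαB
      obtain ⟨hαΔ, hαv⟩ := hmem α hαp
      have hlα := hlampos α hαp
      have hρμα : 0 < ⟪ρμ, α⟫ := by
        have h : ⟪lam, α⟫ = ⟪μ, α⟫ + ⟪ρμ, α⟫ := by
          rw [hlμ, inner_add_left]
        linarith
      have hex : ∃ γ ∈ Z, 0 < ⟪γ, α⟫ := by
        by_contra hno
        push_neg at hno
        have : ⟪ρμ, α⟫ ≤ 0 := by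
          rw [hρμZ, real_inner_smul_left, sum_inner]
          have h : ∑ γ ∈ Z, ⟪γ, α⟫ ≤ 0 := Finset.sum_nonpos hno
          nlinarith
        linarith
      obtain ⟨γ, hγZ, hγα⟩ := hex
      have hγmem := hγZ
      rw [hZ, mem_filter] at hγmem
      obtain ⟨hγp, hγμ⟩ := hγmem
      obtain ⟨hγΔ, hγv⟩ := hmem γ hγp
      have hαZc : α ∈ Zc := by
        rw [hZc, mem_filter]
        refine ⟨hαp, ?_⟩
        rw [real_inner_comm]
        linarith
      have hsmem2 : s γ α ∈ Δpos := hE3 γ hγZ α hαZc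
      have hc : 0 < 2 * ⟪α, γ⟫ / ⟪γ, γ⟫ := by
        have := hgg γ hγΔ
        have h2 : 0 < ⟪α, γ⟫ := by rw [real_inner_comm]; exact hγα
        positivity
      have hsBad : s γ α ∈ Bad := by
        rw [hBad, mem_filter]
        refine ⟨hsmem2, ?_⟩
        have h : ⟪μ, s γ α⟫ = ⟪μ, α⟫ - (2 * ⟪α, γ⟫ / ⟪γ, γ⟫) * ⟪μ, γ⟫ := by
          rw [real_inner_comm, hsv, real_inner_comm α μ, real_inner_comm γ μ]
        have h2 : ⟪μ, γ⟫ = 0 := by rw [real_inner_comm]; exact hγμ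
        rw [h, h2]
        linarith [mul_zero (2 * ⟪α, γ⟫ / ⟪γ, γ⟫)]
      have hsmall : ⟪s γ α, v⟫ < ⟪α, v⟫ := by
        rw [hsv]
        nlinarith
      have := hαmin (s γ α) hsBad
      linarith
    -- ρμD = ρ - ρμ
    have hsetD : Δ.filter (fun α => 0 < ⟪α, μ⟫) = Zc := by
      apply Finset.ext
      intro α
      rw [mem_filter, hZc, mem_filter]
      constructor
      · rintro ⟨hαΔ, hαμ⟩
        have hαp : α ∈ Δpos := by
          by_contra hn
          have h1 : ⟪α, v⟫ < 0 := hnotpos α hαΔ hn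
          have h2 : -α ∈ Δpos := hmem' (-α) (hneg α hαΔ) (by rw [inner_neg_left]; linarith)
          have h3 := hC (-α) h2
          rw [inner_neg_right] at h3
          rw [real_inner_comm] at hαμ
          linarith
        exact ⟨hαp, by linarith⟩
      · rintro ⟨hαp, hαμ⟩
        have h := hC α hαp
        rw [real_inner_comm] at h
        exact ⟨(hmem α hαp).1, lt_of_le_of_ne h (Ne.symm hαμ)⟩
    have hρμD_eq : ρμD = ρ - ρμ := by
      rw [hρμD, hsetD, hdiff]
    refine ⟨hC, ?_⟩
    rw [hρlam_eq, hρμD_eq, hlμ]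
    abel
  · -- backward direction
    rintro ⟨hC, heq⟩
    have hsetD : Δ.filter (fun α => 0 < ⟪α, μ⟫) = Zc := by
      apply Finset.ext
      intro α
      rw [mem_filter, hZc, mem_filter]
      constructor
      · rintro ⟨hαΔ, hαμ⟩
        have hαp : α ∈ Δpos := by
          by_contra hn
          have h1 : ⟪α, v⟫ < 0 := hnotpos α hαΔ hn
          have h2 : -α ∈ Δpos := hmem' (-α) (hneg α hαΔ) (by rw [inner_neg_left]; linarith)
          have h3 := hC (-α) h2
          rw [inner_neg_right] at h3
          rw [real_inner_comm] at hαμ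
          linarith
        exact ⟨hαp, by linarith⟩
      · rintro ⟨hαp, hαμ⟩
        have h := hC α hαp
        rw [real_inner_comm] at h
        exact ⟨(hmem α hαp).1, lt_of_le_of_ne h (Ne.symm hαμ)⟩
    have hρμD_eq : ρμD = ρ - ρμ := by
      rw [hρμD, hsetD, hdiff]
    rw [hρlam_eq, hρμD_eq] at heq
    have hlμ : lam - μ = ρμ := by
      rw [sub_eq_iff_eq_add] at heq
      rw [heq]
      abel
    rw [hlμ]
end

section
/- Suppose λ ∈ ρ + C, μ ∈ E, and w ∈ W. Then ‖λ − w(μ)‖ ≥ ‖ρ_μ‖. (This is the Weyl-group form of the statement that the distance between a regular admissible coadjoint orbit and any coadjoint orbit of type (h) is at least ‖ρ^H‖: a very regular element is a W-conjugate of an element of the shifted Weyl chamber ρ + C.) -/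
open scoped RealInnerProductSpace
open Finset

namespace OrbitAux

variable {E : Type*} [NormedAddCommGroup E] [InnerProductSpace ℝ E]

noncomputable def sref (β x : E) : E := x - (2 * ⟪x, β⟫ / ⟪β, β⟫) • β

lemma sref_inner (β x y : E) : ⟪sref β x, y⟫ = ⟪x, y⟫ - (2 * ⟪x, β⟫ / ⟪β, β⟫) * ⟪β, y⟫ := by
  simp [sref, inner_sub_left, real_inner_smul_left]

lemma sref_selfadj (β x y : E) : ⟪sref β x, y⟫ = ⟪x, sref β y⟫ := by
  rw [sref_inner, ← real_inner_comm x (sref β y), sref_inner, real_inner_comm y x,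
    real_inner_comm β x, real_inner_comm β y]
  ring

lemma sref_invol {β : E} (hβ : ⟪β, β⟫ ≠ 0) (x : E) : sref β (sref β x) = x := by
  have h1 : ⟪sref β x, β⟫ = -⟪x, β⟫ := by
    rw [sref_inner]
    field_simp
    ring
  rw [sref, h1, sref]
  have : (2 * -⟪x, β⟫ / ⟪β, β⟫ : ℝ) = -(2 * ⟪x, β⟫ / ⟪β, β⟫) := by ring
  rw [this, neg_smul, sub_neg_eq_add, sub_add_cancel]

lemma sref_inj {β : E} (hβ : ⟪β, β⟫ ≠ 0) : Function.Injective (sref β) := by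
  intro a b h
  rw [← sref_invol hβ a, h, sref_invol hβ]

lemma sref_norm {β : E} (hβ : ⟪β, β⟫ ≠ 0) (x : E) : ‖sref β x‖ = ‖x‖ := by
  have h : ⟪sref β x, sref β x⟫ = ⟪x, x⟫ := by
    rw [sref_selfadj, sref_invol hβ]
  rw [real_inner_self_eq_norm_mul_norm, real_inner_self_eq_norm_mul_norm] at h
  nlinarith [norm_nonneg (sref β x), norm_nonneg x]

lemma sref_sum (β : E) (Q : Finset E) :
    sref β (∑ α ∈ Q, α) = ∑ α ∈ Q, sref β α := by
  unfold sref
  rw [Finset.sum_sub_distrib, ← Finset.sum_smul]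
  congr 2
  rw [sum_inner, ← Finset.sum_div, ← Finset.mul_sum]

lemma sref_self {β : E} (hβ : ⟪β, β⟫ ≠ 0) : sref β β = -β := by
  rw [sref, mul_div_assoc, div_self hβ, mul_one, two_smul]
  abel

lemma sref_neg' (β x : E) : sref (-β) x = sref β x := by
  unfold sref
  rw [inner_neg_right, inner_neg_left, inner_neg_right, neg_neg, smul_neg]
  have : (2 * -⟪x, β⟫ / ⟪β, β⟫ : ℝ) = -(2 * ⟪x, β⟫ / ⟪β, β⟫) := by ring
  rw [this, neg_smul, neg_neg]

/-- The key computation: the pairing of `β` with the sum of `u`-positive elements is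
monotone in the (reflection-closed) system. -/
theorem core (B C : Finset E) (u β : E) (hCB : C ⊆ B)
    (hclB : ∀ α ∈ B, sref β α ∈ B) (hclC : ∀ α ∈ C, sref β α ∈ C)
    (hβu : 0 < ⟪β, u⟫) (hββ : 0 < ⟪β, β⟫) :
    ⟪∑ α ∈ C.filter (fun α => 0 < ⟪α, u⟫), α, β⟫ ≤
      ⟪∑ α ∈ B.filter (fun α => 0 < ⟪α, u⟫), α, β⟫ := by
  classical
  have hβ0 : ⟪β, β⟫ ≠ 0 := ne_of_gt hββ
  set P : Finset E := B.filter (fun α => 0 < ⟪α, u⟫) with hP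
  set P' : Finset E := C.filter (fun α => 0 < ⟪α, u⟫) with hP'
  set Q : Finset E := P.image (sref β) with hQ
  set Q' : Finset E := P'.image (sref β) with hQ'
  have hmemQ : ∀ γ, γ ∈ Q ↔ sref β γ ∈ P := by
    intro γ
    constructor
    · rintro hγ
      obtain ⟨α, hα, rfl⟩ := Finset.mem_image.mp hγ
      rwa [sref_invol hβ0]
    · intro h
      exact Finset.mem_image.mpr ⟨sref β γ, h, sref_invol hβ0 γ⟩
  have hmemQ' : ∀ γ, γ ∈ Q' ↔ sref β γ ∈ P' := by
    intro γ
    constructor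
    · rintro hγ
      obtain ⟨α, hα, rfl⟩ := Finset.mem_image.mp hγ
      rwa [sref_invol hβ0]
    · intro h
      exact Finset.mem_image.mpr ⟨sref β γ, h, sref_invol hβ0 γ⟩
  set g : Finset E → ℝ := fun A => ∑ γ ∈ A, ⟪γ, u⟫ with hg
  have hX : ∀ P0 : Finset E, g P0 - g (P0.image (sref β)) =
      ⟪∑ α ∈ P0, α, β⟫ * (2 * ⟪β, u⟫ / ⟪β, β⟫) := by
    intro P0
    have h1 : (∑ γ ∈ P0.image (sref β), ⟪γ, u⟫) = ∑ α ∈ P0, ⟪sref β α, u⟫ :=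
      Finset.sum_image (fun a _ b _ h => sref_inj hβ0 h)
    have h2 : ∀ α : E, ⟪α, u⟫ - ⟪sref β α, u⟫ = (2 * ⟪α, β⟫ / ⟪β, β⟫) * ⟪β, u⟫ := by
      intro α
      rw [sref_inner]
      ring
    show (∑ γ ∈ P0, ⟪γ, u⟫) - (∑ γ ∈ P0.image (sref β), ⟪γ, u⟫) = _
    rw [h1, ← Finset.sum_sub_distrib, Finset.sum_congr rfl (fun α _ => h2 α), sum_inner,
      Finset.sum_mul]
    congr 1
    ext α
    ring
  have hdiff : ∀ P0 Q0 : Finset E, g P0 - g Q0 = g (P0 \ Q0) - g (Q0 \ P0) := by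
    intro P0 Q0
    have h1 : g (P0 ∩ Q0) + g (P0 \ Q0) = g P0 := Finset.sum_inter_add_sum_sdiff P0 Q0 _
    have h2 : g (Q0 ∩ P0) + g (Q0 \ P0) = g Q0 := Finset.sum_inter_add_sum_sdiff Q0 P0 _
    rw [Finset.inter_comm] at h2
    linarith
  have hI1 : P' \ Q' ⊆ P \ Q := by
    intro α hα
    obtain ⟨hα1, hα2⟩ := Finset.mem_sdiff.mp hα
    obtain ⟨hαC, hαu⟩ := Finset.mem_filter.mp hα1
    refine Finset.mem_sdiff.mpr ⟨Finset.mem_filter.mpr ⟨hCB hαC, hαu⟩, ?_⟩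
    rw [hmemQ]
    intro hcon
    apply hα2
    rw [hmemQ']
    exact Finset.mem_filter.mpr ⟨hclC α hαC, (Finset.mem_filter.mp hcon).2⟩
  have hI2 : Q' \ P' ⊆ Q \ P := by
    intro γ hγ
    obtain ⟨hγ1, hγ2⟩ := Finset.mem_sdiff.mp hγ
    have hγC : γ ∈ C := by
      have := (hmemQ' γ).mp hγ1
      have h3 : sref β γ ∈ C := (Finset.mem_filter.mp this).1
      have := hclC _ h3
      rwa [sref_invol hβ0] at this
    refine Finset.mem_sdiff.mpr ⟨?_, ?_⟩
    · rw [hmemQ]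
      have := (hmemQ' γ).mp hγ1
      obtain ⟨h3, h4⟩ := Finset.mem_filter.mp this
      exact Finset.mem_filter.mpr ⟨hCB h3, h4⟩
    · intro hcon
      apply hγ2
      exact Finset.mem_filter.mpr ⟨hγC, (Finset.mem_filter.mp hcon).2⟩
  have hb1 : g (P' \ Q') ≤ g (P \ Q) := by
    apply Finset.sum_le_sum_of_subset_of_nonneg hI1
    intro γ hγ _
    have := (Finset.mem_filter.mp (Finset.mem_sdiff.mp hγ).1).2
    exact le_of_lt this
  have hb2 : g (Q \ P) ≤ g (Q' \ P') := by
    have := Finset.sum_sdiff (f := fun γ => ⟪γ, u⟫) hI2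
    have hnp : g ((Q \ P) \ (Q' \ P')) ≤ 0 := by
      apply Finset.sum_nonpos
      intro γ hγ
      have hγQP := (Finset.mem_sdiff.mp hγ).1
      obtain ⟨hγQ, hγP⟩ := Finset.mem_sdiff.mp hγQP
      have hγB : γ ∈ B := by
        have := (hmemQ γ).mp hγQ
        have h3 : sref β γ ∈ B := (Finset.mem_filter.mp this).1
        have := hclB _ h3
        rwa [sref_invol hβ0] at this
      by_contra hcon
      push_neg at hcon
      exact hγP (Finset.mem_filter.mpr ⟨hγB, hcon⟩)
    have : g ((Q \ P) \ (Q' \ P')) + g (Q' \ P') = g (Q \ P) := this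
    linarith
  have hXle : g P' - g Q' ≤ g P - g Q := by
    rw [hdiff P Q, hdiff P' Q']
    linarith
  rw [hX P, hX P'] at hXle
  have hc : 0 < 2 * ⟪β, u⟫ / ⟪β, β⟫ := by positivity
  exact le_of_mul_le_mul_right hXle hc

/-- ⟪2ρ, β∨⟫ ≥ 2 for a positive root β. -/
theorem lower (B : Finset E) (u β : E) (hsym : ∀ α ∈ B, -α ∈ B)
    (hclB : ∀ α ∈ B, sref β α ∈ B) (hβB : β ∈ B) (hβu : 0 < ⟪β, u⟫) (hββ : 0 < ⟪β, β⟫) :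
    ⟪β, β⟫ ≤ ⟪∑ α ∈ B.filter (fun α => 0 < ⟪α, u⟫), α, β⟫ := by
  classical
  have hβ0 : ⟪β, β⟫ ≠ 0 := ne_of_gt hββ
  set C : Finset E := {β, -β} with hC
  have hCB : C ⊆ B := by
    intro γ hγ
    rcases Finset.mem_insert.mp hγ with h | h
    · exact h ▸ hβB
    · rw [Finset.mem_singleton.mp h]; exact hsym β hβB
  have hclC : ∀ α ∈ C, sref β α ∈ C := by
    intro α hα
    rcases Finset.mem_insert.mp hα with h | h
    · subst h
      rw [sref_self hβ0]
      exact Finset.mem_insert.mpr (Or.inr (Finset.mem_singleton.mpr rfl))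
    · rw [Finset.mem_singleton.mp h]
      have : sref β (-β) = β := by
        have := sref_invol hβ0 β
        rwa [sref_self hβ0] at this
      rw [this]
      exact Finset.mem_insert_self _ _
  have hfil : C.filter (fun α => 0 < ⟪α, u⟫) = {β} := by
    ext γ
    simp only [hC, Finset.mem_filter, Finset.mem_insert, Finset.mem_singleton]
    constructor
    · rintro ⟨h | h, hpos⟩
      · exact h
      · subst h
        rw [inner_neg_left] at hpos
        linarith
    · rintro rfl
      exact ⟨Or.inl rfl, hβu⟩
  have := core B C u β hCB hclB hclC hβu hββ
  rwa [hfil, Finset.sum_singleton] at this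

/-- Norm of the sum of positive elements is independent of the regular vector. -/
theorem norm_inv (B : Finset E) (h0 : (0 : E) ∉ B) (hsym : ∀ α ∈ B, -α ∈ B)
    (hcl : ∀ β ∈ B, ∀ α ∈ B, sref β α ∈ B) (u v : E)
    (hu : ∀ α ∈ B, ⟪α, u⟫ ≠ 0) (hv : ∀ α ∈ B, ⟪α, v⟫ ≠ 0) :
    ‖∑ α ∈ B.filter (fun α => 0 < ⟪α, u⟫), α‖ = ‖∑ α ∈ B.filter (fun α => 0 < ⟪α, v⟫), α‖ := by
  classical
  have hne0 : ∀ β ∈ B, ⟪β, β⟫ ≠ 0 := by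
    intro β hβ hcon
    have : β = 0 := by rwa [real_inner_self_eq_norm_mul_norm, mul_self_eq_zero, norm_eq_zero] at hcon
    exact h0 (this ▸ hβ)
  have hpos0 : ∀ β ∈ B, 0 < ⟪β, β⟫ := by
    intro β hβ
    rcases lt_or_eq_of_le (real_inner_self_nonneg (x := β)) with h | h
    · exact h
    · exact absurd h.symm (hne0 β hβ)
  set Av : E := ∑ α ∈ B.filter (fun α => 0 < ⟪α, v⟫), α with hAv
  set Good : Finset E → Prop := fun P =>
    (∃ t : E, (∀ α ∈ B, ⟪α, t⟫ ≠ 0) ∧ P = B.filter (fun α => 0 < ⟪α, t⟫)) ∧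
      ‖∑ α ∈ P, α‖ = ‖∑ α ∈ B.filter (fun α => 0 < ⟪α, u⟫), α‖ with hGood
  set PP : Finset (Finset E) := B.powerset.filter Good with hPP
  have hmem : B.filter (fun α => 0 < ⟪α, u⟫) ∈ PP := by
    rw [hPP, Finset.mem_filter]
    exact ⟨Finset.mem_powerset.mpr (Finset.filter_subset _ _), ⟨u, hu, rfl⟩, rfl⟩
  obtain ⟨P, hP𝒫, hPmax⟩ := Finset.exists_max_image PP (fun P => ⟪∑ α ∈ P, α, Av⟫) ⟨_, hmem⟩
  rw [hPP, Finset.mem_filter] at hP𝒫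
  obtain ⟨hPB, ⟨t, ht, hPt⟩, hPnorm⟩ := hP𝒫
  have hkey : ∀ β ∈ B, 0 < ⟪β, v⟫ → 0 < ⟪β, t⟫ := by
    intro β hβB hβv
    by_contra hcon
    have hβt : ⟪β, t⟫ < 0 := lt_of_le_of_ne (not_lt.mp hcon) (ht β hβB)
    have hββ : 0 < ⟪β, β⟫ := hpos0 β hβB
    have hβ0 : ⟪β, β⟫ ≠ 0 := ne_of_gt hββ
    set Q : Finset E := P.image (sref β) with hQdef
    have hmemQiff : ∀ γ, γ ∈ Q ↔ sref β γ ∈ P := by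
      intro γ
      constructor
      · rintro hγ
        obtain ⟨α, hα, rfl⟩ := Finset.mem_image.mp hγ
        rwa [sref_invol hβ0]
      · intro h
        exact Finset.mem_image.mpr ⟨sref β γ, h, sref_invol hβ0 γ⟩
    have hQB : Q ⊆ B := by
      intro γ hγ
      obtain ⟨α, hα, rfl⟩ := Finset.mem_image.mp hγ
      have : α ∈ B := (Finset.mem_powerset.mp hPB) hα
      exact hcl β hβB α this
    have hBmemiff : ∀ γ : E, sref β γ ∈ B ↔ γ ∈ B := by
      intro γ
      constructor
      · intro h
        have := hcl β hβB _ h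
        rwa [sref_invol hβ0] at this
      · intro h
        exact hcl β hβB γ h
    have hQgood : Q ∈ PP := by
      rw [hPP, Finset.mem_filter]
      refine ⟨Finset.mem_powerset.mpr hQB, ⟨sref β t, ?_, ?_⟩, ?_⟩
      · intro α hα
        rw [← sref_selfadj]
        exact ht _ ((hBmemiff α).mpr hα)
      · ext γ
        rw [hmemQiff, hPt, Finset.mem_filter, Finset.mem_filter, hBmemiff, sref_selfadj]
      · have hsum : (∑ α ∈ Q, α) = sref β (∑ α ∈ P, α) := by
          rw [sref_sum]
          exact (Finset.sum_image (fun a _ b _ h => sref_inj hβ0 h))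
        rw [hsum, sref_norm hβ0]
        exact hPnorm
    have hAvβ : ⟪β, β⟫ ≤ ⟪Av, β⟫ :=
      lower B v β hsym (hcl β hβB) hβB hβv hββ
    have hPβ : ⟪∑ α ∈ P, α, β⟫ ≤ -⟪β, β⟫ := by
      have hnegβB : -β ∈ B := hsym β hβB
      have hlow := lower B t (-β) hsym
        (fun α hα => by rw [sref_neg']; exact hcl β hβB α hα) hnegβB
        (by rw [inner_neg_left]; linarith) (by rwa [inner_neg_left, inner_neg_right, neg_neg])
      rw [inner_neg_right, inner_neg_left, inner_neg_right, neg_neg, ← hPt] at hlow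
      linarith
    have hφQ : ⟪∑ α ∈ Q, α, Av⟫ =
        ⟪∑ α ∈ P, α, Av⟫ - (2 * ⟪Av, β⟫ / ⟪β, β⟫) * ⟪∑ α ∈ P, α, β⟫ := by
      have hsum : (∑ α ∈ Q, α) = sref β (∑ α ∈ P, α) := by
        rw [sref_sum]
        exact (Finset.sum_image (fun a _ b _ h => sref_inj hβ0 h))
      rw [hsum, sref_selfadj, ← real_inner_comm (∑ α ∈ P, α) (sref β Av), sref_inner,
        real_inner_comm (∑ α ∈ P, α) Av, real_inner_comm (∑ α ∈ P, α) β]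
    have hcoef : 0 < 2 * ⟪Av, β⟫ / ⟪β, β⟫ := by
      apply div_pos _ hββ
      linarith
    have : ⟪∑ α ∈ P, α, Av⟫ < ⟪∑ α ∈ Q, α, Av⟫ := by
      rw [hφQ]
      nlinarith
    exact absurd (hPmax Q hQgood) (not_le.mpr this)
  have hPv : P = B.filter (fun α => 0 < ⟪α, v⟫) := by
    ext γ
    rw [hPt, Finset.mem_filter, Finset.mem_filter]
    constructor
    · rintro ⟨hγB, hγt⟩
      refine ⟨hγB, ?_⟩
      by_contra hcon
      have hγv : ⟪γ, v⟫ < 0 := lt_of_le_of_ne (not_lt.mp hcon) (hv γ hγB)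
      have : 0 < ⟪-γ, t⟫ := hkey (-γ) (hsym γ hγB) (by rw [inner_neg_left]; linarith)
      rw [inner_neg_left] at this
      linarith
    · rintro ⟨hγB, hγv⟩
      exact ⟨hγB, hkey γ hγB hγv⟩
  rw [← hPnorm, hPv]

theorem W_maps (Δ : Finset E)
    (hΔrefl : ∀ α ∈ Δ, ∀ β ∈ Δ, β - (2 * ⟪β, α⟫ / ⟪α, α⟫) • α ∈ Δ)
    (g : E ≃ₗᵢ[ℝ] E)
    (hg : g ∈ Subgroup.closure
      {s : E ≃ₗᵢ[ℝ] E | ∃ α ∈ Δ, ∀ x : E, s x = x - (2 * ⟪x, α⟫ / ⟪α, α⟫) • α}) :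
    ∀ α ∈ Δ, g α ∈ Δ := by
  classical
  induction hg using Subgroup.closure_induction with
  | mem s hs =>
    obtain ⟨γ, hγ, hsx⟩ := hs
    intro α hα
    rw [hsx]
    exact hΔrefl γ hγ α hα
  | one => intro α hα; simpa using hα
  | mul x y hx hy ihx ihy =>
    intro α hα
    have : (x * y) α = x (y α) := rfl
    rw [this]
    exact ihx _ (ihy α hα)
  | inv x hx ihx =>
    intro α hα
    have himg : Δ.image (fun a => x a) = Δ := by
      apply Finset.eq_of_subset_of_card_le
      · intro γ hγ
        obtain ⟨b, hb, rfl⟩ := Finset.mem_image.mp hγ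
        exact ihx b hb
      · rw [Finset.card_image_of_injective _ x.injective]
    have hmem2 : α ∈ Δ.image (fun a => x a) := by rw [himg]; exact hα
    obtain ⟨b, hb, hbα⟩ := Finset.mem_image.mp hmem2
    have hxb : x⁻¹ α = b := by
      have : (x⁻¹ : E ≃ₗᵢ[ℝ] E) α = x.symm α := by rw [LinearIsometryEquiv.coe_inv]
      rw [this]
      exact (x.symm_apply_eq).mpr hbα.symm
    rw [hxb]
    exact hb

end OrbitAux

theorem orbit_distance_ge
    {E : Type*} [NormedAddCommGroup E] [InnerProductSpace ℝ E] [FiniteDimensional ℝ E]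
    (Δ : Finset E)
    (hΔ0 : (0 : E) ∉ Δ)
    (hΔred : ∀ α ∈ Δ, ∀ t : ℝ, t • α ∈ Δ → t = 1 ∨ t = -1)
    (hΔrefl : ∀ α ∈ Δ, ∀ β ∈ Δ, β - (2 * ⟪β, α⟫ / ⟪α, α⟫) • α ∈ Δ)
    (hΔcrys : ∀ α ∈ Δ, ∀ β ∈ Δ, ∃ n : ℤ, 2 * ⟪β, α⟫ / ⟪α, α⟫ = (n : ℝ))
    (v : E) (hv : ∀ α ∈ Δ, ⟪α, v⟫ ≠ 0)
    (Δpos : Finset E) (hΔpos : Δpos = Δ.filter (fun α => 0 < ⟪α, v⟫))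
    (ρ : E) (hρ : ρ = (2 : ℝ)⁻¹ • ∑ α ∈ Δpos, α)    (W : Subgroup (E ≃ₗᵢ[ℝ] E))
    (hW : W = Subgroup.closure
      {s : E ≃ₗᵢ[ℝ] E | ∃ α ∈ Δ, ∀ x : E, s x = x - (2 * ⟪x, α⟫ / ⟪α, α⟫) • α})
    (lam μ : E)
    (hlam : ∀ α ∈ Δpos, 0 ≤ ⟪lam - ρ, α⟫)
    (ρμ : E) (hρμ : ρμ = (2 : ℝ)⁻¹ • ∑ α ∈ Δpos.filter (fun α => ⟪α, μ⟫ = 0), α)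
    (w : E ≃ₗᵢ[ℝ] E) (hw : w ∈ W) :
    ‖lam - w μ‖ ≥ ‖ρμ‖ := by
  classical
  open OrbitAux in
  subst hΔpos hρ hρμ hW
  set ν : E := w μ with hν
  -- basic facts
  have hpos0 : ∀ β ∈ Δ, 0 < ⟪β, β⟫ := by
    intro β hβ
    have hne : β ≠ 0 := fun h => hΔ0 (h ▸ hβ)
    have h1 : ⟪β, β⟫ = ‖β‖ * ‖β‖ := real_inner_self_eq_norm_mul_norm β
    have h2 : 0 < ‖β‖ := norm_pos_iff.mpr hne
    nlinarith
  have hsymΔ : ∀ α ∈ Δ, -α ∈ Δ := by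
    intro α hα
    have h := hΔrefl α hα α hα
    have hk : ⟪α, α⟫ ≠ 0 := ne_of_gt (hpos0 α hα)
    have heq : α - (2 * ⟪α, α⟫ / ⟪α, α⟫) • α = -α := by
      rw [mul_div_assoc, div_self hk, mul_one, two_smul]
      abel
    rwa [heq] at h
  have hclΔ : ∀ β ∈ Δ, ∀ α ∈ Δ, OrbitAux.sref β α ∈ Δ := by
    intro β hβ α hα
    simpa [OrbitAux.sref] using hΔrefl β hβ α hα
  -- Weyl group facts
  have hwd : ∀ α ∈ Δ, w α ∈ Δ := OrbitAux.W_maps Δ hΔrefl w hw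
  have hwd' : ∀ α ∈ Δ, w.symm α ∈ Δ := by
    have h := OrbitAux.W_maps Δ hΔrefl w⁻¹ (inv_mem hw)
    intro α hα
    have heq : (w⁻¹ : E ≃ₗᵢ[ℝ] E) α = w.symm α := by rw [LinearIsometryEquiv.coe_inv]
    rw [← heq]
    exact h α hα
  have hinner_w : ∀ x y : E, ⟪w x, w y⟫ = ⟪x, y⟫ := fun x y => w.inner_map_map x y
  -- the orthogonal subsystems
  set Bnu : Finset E := Δ.filter (fun α => ⟪α, ν⟫ = 0) with hBnu
  set Bmu : Finset E := Δ.filter (fun α => ⟪α, μ⟫ = 0) with hBmu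
  set r : E := ∑ α ∈ Bnu.filter (fun α => 0 < ⟪α, v⟫), α with hr
  set R : E := ∑ α ∈ Δ.filter (fun α => 0 < ⟪α, v⟫), α with hR
  -- Step A : ⟪lam - ν, r⟫ ≥ 2⁻¹ ⟪r, r⟫
  have hνr : ⟪ν, r⟫ = 0 := by
    rw [hr, inner_sum]
    apply Finset.sum_eq_zero
    intro α hα
    have h1 := (Finset.mem_filter.mp (Finset.mem_filter.mp hα).1).2
    rw [real_inner_comm]
    exact h1
  have hSνsub : ∀ α ∈ Bnu.filter (fun α => 0 < ⟪α, v⟫), α ∈ Δ.filter (fun α => 0 < ⟪α, v⟫) := by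
    intro α hα
    obtain ⟨hα1, hα2⟩ := Finset.mem_filter.mp hα
    exact Finset.mem_filter.mpr ⟨(Finset.mem_filter.mp hα1).1, hα2⟩
  have hlamr : 0 ≤ ⟪lam - (2 : ℝ)⁻¹ • R, r⟫ := by
    rw [hr, inner_sum]
    apply Finset.sum_nonneg
    intro α hα
    exact hlam α (hSνsub α hα)
  have hRr : 0 ≤ ⟪R - r, r⟫ := by
    rw [hr, inner_sum]
    apply Finset.sum_nonneg
    intro β hβ
    obtain ⟨hβ1, hβ2⟩ := Finset.mem_filter.mp hβ
    obtain ⟨hβΔ, hβν⟩ := Finset.mem_filter.mp hβ1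
    have hclBnu : ∀ α ∈ Bnu, OrbitAux.sref β α ∈ Bnu := by
      intro α hα
      obtain ⟨hαΔ, hαν⟩ := Finset.mem_filter.mp hα
      refine Finset.mem_filter.mpr ⟨hclΔ β hβΔ α hαΔ, ?_⟩
      rw [OrbitAux.sref_inner, hαν, hβν]
      ring
    have hcore := OrbitAux.core Δ Bnu v β (Finset.filter_subset _ _)
      (hclΔ β hβΔ) hclBnu hβ2 (hpos0 β hβΔ)
    rw [inner_sub_left]
    linarith
  have hA : 2⁻¹ * ⟪r, r⟫ ≤ ⟪lam - ν, r⟫ := by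
    have hsplit : ⟪lam - ν, r⟫ =
        ⟪lam - (2 : ℝ)⁻¹ • R, r⟫ + 2⁻¹ * ⟪R - r, r⟫ + 2⁻¹ * ⟪r, r⟫ - ⟪ν, r⟫ := by
      rw [inner_sub_left, inner_sub_left, inner_sub_left, real_inner_smul_left]
      ring
    rw [hsplit, hνr]
    linarith
  -- Step B : Cauchy-Schwarz
  have hB : 2⁻¹ * (‖r‖ * ‖r‖) ≤ ‖lam - ν‖ * ‖r‖ := by
    have hCS := real_inner_le_norm (lam - ν) r
    have hrr : ⟪r, r⟫ = ‖r‖ * ‖r‖ := real_inner_self_eq_norm_mul_norm r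
    rw [hrr] at hA
    linarith
  -- Step C : ‖ρμ‖ = 2⁻¹ ‖r‖
  set u' : E := w.symm v with hu'
  have hu'eq : ∀ α : E, ⟪α, u'⟫ = ⟪w α, v⟫ := by
    intro α
    calc ⟪α, u'⟫ = ⟪w α, w u'⟫ := (hinner_w α u').symm
    _ = ⟪w α, v⟫ := by rw [hu', w.apply_symm_apply]
  have himg : (Bmu.filter (fun α => 0 < ⟪α, u'⟫)).image (⇑w) = Bnu.filter (fun α => 0 < ⟪α, v⟫) := by
    ext γ
    constructor
    · intro hγ
      obtain ⟨α, hα, rfl⟩ := Finset.mem_image.mp hγ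
      obtain ⟨hα1, hα2⟩ := Finset.mem_filter.mp hα
      obtain ⟨hαΔ, hαμ⟩ := Finset.mem_filter.mp hα1
      refine Finset.mem_filter.mpr ⟨Finset.mem_filter.mpr ⟨hwd α hαΔ, ?_⟩, ?_⟩
      · rw [hν, hinner_w]
        exact hαμ
      · rw [← hu'eq]
        exact hα2
    · intro hγ
      obtain ⟨hγ1, hγ2⟩ := Finset.mem_filter.mp hγ
      obtain ⟨hγΔ, hγν⟩ := Finset.mem_filter.mp hγ1
      refine Finset.mem_image.mpr ⟨w.symm γ, Finset.mem_filter.mpr ⟨Finset.mem_filter.mpr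
        ⟨hwd' γ hγΔ, ?_⟩, ?_⟩, w.apply_symm_apply γ⟩
      · have : ⟪w (w.symm γ), w μ⟫ = ⟪w.symm γ, μ⟫ := hinner_w _ _
        rw [w.apply_symm_apply] at this
        rw [← this, ← hν]
        exact hγν
      · rw [hu'eq, w.apply_symm_apply]
        exact hγ2
  have hsumν : r = w (∑ α ∈ Bmu.filter (fun α => 0 < ⟪α, u'⟫), α) := by
    rw [hr, ← himg, Finset.sum_image (fun a _ b _ h => w.injective h), map_sum]
  have hnorm1 : ‖r‖ = ‖∑ α ∈ Bmu.filter (fun α => 0 < ⟪α, u'⟫), α‖ := by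
    rw [hsumν, w.norm_map]
  have h0Bmu : (0 : E) ∉ Bmu := fun h => hΔ0 (Finset.mem_filter.mp h).1
  have hsymBmu : ∀ α ∈ Bmu, -α ∈ Bmu := by
    intro α hα
    obtain ⟨hαΔ, hαμ⟩ := Finset.mem_filter.mp hα
    refine Finset.mem_filter.mpr ⟨hsymΔ α hαΔ, ?_⟩
    rw [inner_neg_left, hαμ, neg_zero]
  have hclBmu : ∀ β ∈ Bmu, ∀ α ∈ Bmu, OrbitAux.sref β α ∈ Bmu := by
    intro β hβ α hα
    obtain ⟨hβΔ, hβμ⟩ := Finset.mem_filter.mp hβ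
    obtain ⟨hαΔ, hαμ⟩ := Finset.mem_filter.mp hα
    refine Finset.mem_filter.mpr ⟨hclΔ β hβΔ α hαΔ, ?_⟩
    rw [OrbitAux.sref_inner, hαμ, hβμ]
    ring
  have hregu' : ∀ α ∈ Bmu, ⟪α, u'⟫ ≠ 0 := by
    intro α hα
    rw [hu'eq]
    exact hv _ (hwd α (Finset.mem_filter.mp hα).1)
  have hregv : ∀ α ∈ Bmu, ⟪α, v⟫ ≠ 0 := fun α hα => hv α (Finset.mem_filter.mp hα).1
  have hnorm2 := OrbitAux.norm_inv Bmu h0Bmu hsymBmu hclBmu u' v hregu' hregv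
  have hfilterswap : (Δ.filter (fun α => 0 < ⟪α, v⟫)).filter (fun α => ⟪α, μ⟫ = 0)
      = Bmu.filter (fun α => 0 < ⟪α, v⟫) := by
    rw [hBmu, Finset.filter_comm]
  have hρμnorm : ‖(2 : ℝ)⁻¹ • ∑ α ∈ (Δ.filter (fun α => 0 < ⟪α, v⟫)).filter
      (fun α => ⟪α, μ⟫ = 0), α‖ = 2⁻¹ * ‖r‖ := by
    rw [hfilterswap, norm_smul]
    rw [hnorm1, hnorm2]
    norm_num
  -- conclusion
  rw [ge_iff_le, hρμnorm]
  rcases eq_or_lt_of_le (norm_nonneg r) with h0r | h0r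
  · rw [← h0r, mul_zero]
    exact norm_nonneg _
  · nlinarith
end

section
/- Let S be a subset of the set of simple roots and let V = {x ∈ E : (x,α) = 0 for all α ∈ S}. If ξ ∈ E satisfies (ξ,α) > 0 for every α ∈ Δ⁺, then the orthogonal projection p of ξ onto V satisfies (p,β) > 0 for every simple root β ∉ S; in particular p ∈ C. (The orthogonal projection of an interior point of the Weyl chamber onto the linear span of a face lies in the relative interior of that face.) -/
open scoped RealInnerProductSpace
open Finset

/-!
Distinct indecomposable positive roots `α`, `β` satisfy `⟪α, β⟫ ≤ 0`: otherwise one of the two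
Cartan integers equals `1`, so `±(α - β)` is a positive root decomposing `α` or `β`.
Write `ξ = p + q` with `q ∈ span S`. Since `⟪q, α⟫ = ⟪ξ, α⟫ > 0` for `α ∈ S` and `S` is an obtuse
family, `q` is a nonnegative combination of `S`; hence `⟪q, β⟫ ≤ 0`, i.e. `⟪p, β⟫ ≥ ⟪ξ, β⟫ > 0`,
for every simple `β ∉ S`. As every positive root is a sum of simple ones, `p` lies in the chamber.
-/

section Decomposable

variable {M : Type*} [AddCommMonoid M]

def IsDecomposable (P : Finset M) (x : M) : Prop :=
  ∃ y ∈ P, ∃ z ∈ P, x = y + z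

theorem forall_mem_of_indecomposable (ℓ : M →+ ℝ) {P : Finset M} (hP : ∀ x ∈ P, 0 < ℓ x)
    {Q : M → Prop} (indec : ∀ x ∈ P, ¬ IsDecomposable P x → Q x)
    (add : ∀ y ∈ P, ∀ z ∈ P, Q y → Q z → Q (y + z)) : ∀ x ∈ P, Q x := by
  classical
  by_contra! ⟨x₀, hx₀, hQx₀⟩
  obtain ⟨x, hx, hmin⟩ := (P.filter (¬ Q ·)).exists_min_image ℓ ⟨x₀, mem_filter.2 ⟨hx₀, hQx₀⟩⟩
  obtain ⟨hxP, hQx⟩ := mem_filter.1 hx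
  have below : ∀ y ∈ P, ℓ y < ℓ x → Q y := fun y hy hlt => by
    by_contra hQy
    exact (hmin y (mem_filter.2 ⟨hy, hQy⟩)).not_gt hlt
  obtain ⟨y, hy, z, hz, rfl⟩ : IsDecomposable P x := by
    by_contra hdec
    exact hQx (indec x hxP hdec)
  refine hQx (add y hy z hz (below y hy ?_) (below z hz ?_)) <;>
    simp only [map_add] <;> linarith [hP y hy, hP z hz]

end Decomposable

section ObtuseFamily

variable {E : Type*} [NormedAddCommGroup E] [InnerProductSpace ℝ E]

theorem exists_nonneg_coeffs_of_pairwise_inner_nonpos {S : Finset E}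
    (hS : (S : Set E).Pairwise fun a b => ⟪a, b⟫ ≤ 0) {q : E}
    (hq : q ∈ Submodule.span ℝ (S : Set E)) (hqS : ∀ a ∈ S, 0 ≤ ⟪q, a⟫) :
    ∃ c : E → ℝ, (∀ a ∈ S, 0 ≤ c a) ∧ ∑ a ∈ S, c a • a = q := by
  obtain ⟨c, -, hc⟩ := Submodule.mem_span_finset.1 hq
  set qp := ∑ a ∈ S, max (c a) 0 • a
  set qn := ∑ a ∈ S, min (c a) 0 • a
  have hsplit : qp + qn = q := by
    rw [← hc, ← sum_add_distrib]
    exact sum_congr rfl fun a _ => by rw [← add_smul, max_add_min, add_zero]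
  -- the diagonal terms vanish because `max t 0 * min t 0 = 0`
  have hcross : 0 ≤ ⟪qp, qn⟫ := by
    simp only [qp, qn, sum_inner, inner_sum, real_inner_smul_left, real_inner_smul_right]
    refine sum_nonneg fun a ha => sum_nonneg fun b hb => ?_
    obtain rfl | hab := eq_or_ne a b
    · rcases le_total (c a) 0 with h | h <;> simp [h]
    · exact mul_nonneg_of_nonpos_of_nonpos (min_le_right _ _)
        (mul_nonpos_of_nonneg_of_nonpos (le_max_right _ _) (hS hb ha hab.symm))
  have hneg : ⟪q, qn⟫ ≤ 0 := by
    simp only [qn, inner_sum, real_inner_smul_right]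
    exact sum_nonpos fun a ha => mul_nonpos_of_nonpos_of_nonneg (min_le_right _ _) (hqS a ha)
  have hqn : qn = 0 := by
    rw [← hsplit, inner_add_left] at hneg
    exact real_inner_self_nonpos.1 (by linarith)
  exact ⟨fun a => max (c a) 0, fun a _ => le_max_right _ _, by rw [← hsplit, hqn, add_zero]⟩

theorem inner_nonpos_of_mem_span_of_pairwise_inner_nonpos {S : Finset E}
    (hS : (S : Set E).Pairwise fun a b => ⟪a, b⟫ ≤ 0) {q : E}
    (hq : q ∈ Submodule.span ℝ (S : Set E)) (hqS : ∀ a ∈ S, 0 ≤ ⟪q, a⟫) {β : E}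
    (hβ : ∀ a ∈ S, ⟪a, β⟫ ≤ 0) : ⟪q, β⟫ ≤ 0 := by
  obtain ⟨c, hc, rfl⟩ := exists_nonneg_coeffs_of_pairwise_inner_nonpos hS hq hqS
  rw [sum_inner]
  exact sum_nonpos fun a ha => by
    rw [real_inner_smul_left]; exact mul_nonpos_of_nonneg_of_nonpos (hc a ha) (hβ a ha)

theorem inner_le_inner_orthogonalProjectionOnto_orthogonal_span {S : Finset E}
    (hS : (S : Set E).Pairwise fun a b => ⟪a, b⟫ ≤ 0) {ξ : E} (hξ : ∀ a ∈ S, 0 ≤ ⟪ξ, a⟫)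
    {β : E} (hβ : ∀ a ∈ S, ⟪a, β⟫ ≤ 0) :
    ⟪ξ, β⟫ ≤ ⟪((Submodule.span ℝ (S : Set E))ᗮ.orthogonalProjectionOnto ξ : E), β⟫ := by
  set K := Submodule.span ℝ (S : Set E)
  set p : E := Kᗮ.orthogonalProjectionOnto ξ
  have hpS : ∀ a ∈ S, ⟪p, a⟫ = 0 := fun a ha =>
    Submodule.inner_left_of_mem_orthogonal (Submodule.subset_span ha) (SetLike.coe_mem _)
  have hq : ξ - p ∈ K := by
    have := Kᗮ.sub_starProjection_mem_orthogonal ξ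
    rwa [Submodule.orthogonal_orthogonal] at this
  have hqS : ∀ a ∈ S, 0 ≤ ⟪ξ - p, a⟫ := fun a ha => by
    rw [inner_sub_left, hpS a ha, sub_zero]; exact hξ a ha
  have := inner_nonpos_of_mem_span_of_pairwise_inner_nonpos hS hq hqS hβ
  rw [inner_sub_left] at this
  linarith

end ObtuseFamily

section RootSystem

variable {E : Type*} [NormedAddCommGroup E] [InnerProductSpace ℝ E] {Δ : Finset E}

theorem neg_mem_of_reflection_mem (hrefl : ∀ α ∈ Δ, ∀ β ∈ Δ, β - (2 * ⟪β, α⟫ / ⟪α, α⟫) • α ∈ Δ)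
    {α : E} (hα : α ∈ Δ) (hα0 : α ≠ 0) : -α ∈ Δ := by
  have h := hrefl α hα α hα
  rwa [mul_div_assoc, div_self (inner_self_ne_zero.2 hα0), mul_one, two_smul, sub_add_cancel_left]
    at h

theorem sub_mem_of_inner_pos (hrefl : ∀ α ∈ Δ, ∀ β ∈ Δ, β - (2 * ⟪β, α⟫ / ⟪α, α⟫) • α ∈ Δ)
    (hcrys : ∀ α ∈ Δ, ∀ β ∈ Δ, ∃ n : ℤ, 2 * ⟪β, α⟫ / ⟪α, α⟫ = (n : ℝ))
    {α β : E} (hα : α ∈ Δ) (hβ : β ∈ Δ) (hne : α ≠ β) (hpos : 0 < ⟪α, β⟫) : α - β ∈ Δ := by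
  have hαα : 0 < ⟪α, α⟫ := real_inner_self_pos.2 fun h => by simp [h] at hpos
  have hββ : 0 < ⟪β, β⟫ := real_inner_self_pos.2 fun h => by simp [h] at hpos
  obtain ⟨n, hn⟩ := hcrys α hα β hβ
  obtain ⟨m, hm⟩ := hcrys β hβ α hα
  have hn0 : 0 < n := by
    have : (0 : ℝ) < n := hn ▸ by rw [real_inner_comm]; positivity
    exact_mod_cast this
  have hm0 : 0 < m := by
    have : (0 : ℝ) < m := hm ▸ by positivity
    exact_mod_cast this
  rcases eq_or_ne n 1 with rfl | hn1
  · have h := hrefl α hα β hβ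
    rw [hn, Int.cast_one, one_smul] at h
    simpa using neg_mem_of_reflection_mem hrefl h (sub_ne_zero.2 hne.symm)
  rcases eq_or_ne m 1 with rfl | hm1
  · have h := hrefl β hβ α hα
    rwa [hm, Int.cast_one, one_smul] at h
  -- both Cartan integers are at least 2, which forces `‖α - β‖ ≤ 0`
  have hn2 : (2 : ℝ) ≤ n := by exact_mod_cast (by omega : 2 ≤ n)
  have hm2 : (2 : ℝ) ≤ m := by exact_mod_cast (by omega : 2 ≤ m)
  rw [div_eq_iff hαα.ne'] at hn
  rw [div_eq_iff hββ.ne'] at hm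
  rw [real_inner_comm] at hn
  have : ⟪α - β, α - β⟫ ≤ 0 := by
    rw [inner_sub_sub_self, real_inner_comm α β]
    nlinarith [mul_le_mul_of_nonneg_right hn2 hαα.le, mul_le_mul_of_nonneg_right hm2 hββ.le]
  exact absurd (sub_eq_zero.1 (real_inner_self_nonpos.1 this)) hne

theorem inner_nonpos_of_not_isDecomposable
    (hrefl : ∀ α ∈ Δ, ∀ β ∈ Δ, β - (2 * ⟪β, α⟫ / ⟪α, α⟫) • α ∈ Δ)
    (hcrys : ∀ α ∈ Δ, ∀ β ∈ Δ, ∃ n : ℤ, 2 * ⟪β, α⟫ / ⟪α, α⟫ = (n : ℝ))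
    {v : E} (hv : ∀ α ∈ Δ, ⟪α, v⟫ ≠ 0) {Δpos : Finset E}
    (hΔpos : Δpos = Δ.filter (fun α => 0 < ⟪α, v⟫)) {α β : E} (hα : α ∈ Δpos) (hβ : β ∈ Δpos)
    (hαd : ¬ IsDecomposable Δpos α) (hβd : ¬ IsDecomposable Δpos β) (hne : α ≠ β) :
    ⟪α, β⟫ ≤ 0 := by
  subst hΔpos
  rw [mem_filter] at hα hβ
  by_contra! hpos
  have hsub := sub_mem_of_inner_pos hrefl hcrys hα.1 hβ.1 hne hpos
  rcases (hv _ hsub).lt_or_gt with hlt | hgt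
  · have hsub' : β - α ∈ Δ := by
      simpa using neg_mem_of_reflection_mem hrefl hsub (sub_ne_zero.2 hne)
    refine hβd ⟨β - α, mem_filter.2 ⟨hsub', ?_⟩, α, mem_filter.2 hα, by abel⟩
    rw [inner_sub_left] at hlt ⊢
    linarith
  · exact hαd ⟨α - β, mem_filter.2 ⟨hsub, hgt⟩, β, mem_filter.2 hβ, by abel⟩

end RootSystem

theorem projection_onto_face_span_general
    {E : Type*} [NormedAddCommGroup E] [InnerProductSpace ℝ E] [FiniteDimensional ℝ E]
    (Δ : Finset E)
    (hΔrefl : ∀ α ∈ Δ, ∀ β ∈ Δ, β - (2 * ⟪β, α⟫ / ⟪α, α⟫) • α ∈ Δ)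
    (hΔcrys : ∀ α ∈ Δ, ∀ β ∈ Δ, ∃ n : ℤ, 2 * ⟪β, α⟫ / ⟪α, α⟫ = (n : ℝ))
    (v : E) (hv : ∀ α ∈ Δ, ⟪α, v⟫ ≠ 0)
    (Δpos : Finset E) (hΔpos : Δpos = Δ.filter (fun α => 0 < ⟪α, v⟫))
    (S : Finset E)
    (hS : ∀ α ∈ S, α ∈ Δpos ∧ ¬ ∃ β ∈ Δpos, ∃ γ ∈ Δpos, α = β + γ)
    (V : Submodule ℝ E) (hV : V = (Submodule.span ℝ (S : Set E))ᗮ)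
    (ξ : E) (hξ : ∀ α ∈ Δpos, 0 < ⟪ξ, α⟫)
    (p : E) (hp : p = (Submodule.orthogonalProjectionOnto V ξ : E)) :
    (∀ β ∈ Δpos, (¬ ∃ β' ∈ Δpos, ∃ γ ∈ Δpos, β = β' + γ) → β ∉ S → 0 < ⟪p, β⟫) ∧
    (∀ α ∈ Δpos, 0 ≤ ⟪p, α⟫) := by
  subst hV hp
  have hobtuse : ∀ {α β}, α ∈ S → β ∈ Δpos → ¬ IsDecomposable Δpos β → α ≠ β → ⟪α, β⟫ ≤ 0 :=
    fun hα hβ hβd hne => inner_nonpos_of_not_isDecomposable hΔrefl hΔcrys hv hΔpos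
      (hS _ hα).1 hβ (hS _ hα).2 hβd hne
  have hpS : ∀ α ∈ S, ⟪(Submodule.orthogonalProjectionOnto _ ξ : E), α⟫ = 0 := fun α hα =>
    Submodule.inner_left_of_mem_orthogonal (Submodule.subset_span hα) (SetLike.coe_mem _)
  have hpos : ∀ β ∈ Δpos, ¬ IsDecomposable Δpos β → β ∉ S →
      0 < ⟪(Submodule.orthogonalProjectionOnto _ ξ : E), β⟫ := fun β hβ hβd hβS =>
    (hξ β hβ).trans_le <| inner_le_inner_orthogonalProjectionOnto_orthogonal_span
      (fun a ha b hb hab => hobtuse ha (hS b hb).1 (hS b hb).2 hab)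
      (fun a ha => (hξ a (hS a ha).1).le)
      (fun a ha => hobtuse ha hβ hβd (ne_of_mem_of_not_mem ha hβS))
  refine ⟨hpos, forall_mem_of_indecomposable (innerₛₗ ℝ v).toAddMonoidHom ?_ ?_ ?_⟩
  · intro α hα
    rw [hΔpos, mem_filter] at hα
    simpa [real_inner_comm] using hα.2
  · intro α hα hαd
    by_cases hαS : α ∈ S
    · exact (hpS α hαS).ge
    · exact (hpos α hα hαd hαS).le
  · intro β _ γ _ hβ hγ
    rw [inner_add_right]
    exact add_nonneg hβ hγ

theorem projection_onto_face_span
    {E : Type*} [NormedAddCommGroup E] [InnerProductSpace ℝ E] [FiniteDimensional ℝ E]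
    (Δ : Finset E)
    (hΔ0 : (0 : E) ∉ Δ)
    (hΔred : ∀ α ∈ Δ, ∀ t : ℝ, t • α ∈ Δ → t = 1 ∨ t = -1)
    (hΔrefl : ∀ α ∈ Δ, ∀ β ∈ Δ, β - (2 * ⟪β, α⟫ / ⟪α, α⟫) • α ∈ Δ)
    (hΔcrys : ∀ α ∈ Δ, ∀ β ∈ Δ, ∃ n : ℤ, 2 * ⟪β, α⟫ / ⟪α, α⟫ = (n : ℝ))
    (v : E) (hv : ∀ α ∈ Δ, ⟪α, v⟫ ≠ 0)
    (Δpos : Finset E) (hΔpos : Δpos = Δ.filter (fun α => 0 < ⟪α, v⟫))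
    (ρ : E) (hρ : ρ = (2 : ℝ)⁻¹ • ∑ α ∈ Δpos, α)    (S : Finset E)
    (hS : ∀ α ∈ S, α ∈ Δpos ∧ ¬ ∃ β ∈ Δpos, ∃ γ ∈ Δpos, α = β + γ)
    (V : Submodule ℝ E) (hV : V = (Submodule.span ℝ (S : Set E))ᗮ)
    (ξ : E) (hξ : ∀ α ∈ Δpos, 0 < ⟪ξ, α⟫)
    (p : E) (hp : p = (Submodule.orthogonalProjectionOnto V ξ : E)) :
    (∀ β ∈ Δpos, (¬ ∃ β' ∈ Δpos, ∃ γ ∈ Δpos, β = β' + γ) → β ∉ S → 0 < ⟪p, β⟫) ∧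
    (∀ α ∈ Δpos, 0 ≤ ⟪p, α⟫) :=
  projection_onto_face_span_general Δ hΔrefl hΔcrys v hv Δpos hΔpos S hS V hV ξ hξ p hp
end

section
/- Let μ ∈ C and set λ = μ + ρ_μ (the shift of μ). Assume λ is regular, i.e. (λ,α) ≠ 0 for every α ∈ Δ, and that λ is admissible, i.e. (λ − ρ(λ), α∨) ∈ ℤ for every α ∈ Δ. Then μ is admissible: (μ − ρ(μ), α∨) ∈ ℤ for every α ∈ Δ. -/
open scoped RealInnerProductSpace
open Finset
theorem shift_regular_admissible_implies_admissible
    {E : Type*} [NormedAddCommGroup E] [InnerProductSpace ℝ E] [FiniteDimensional ℝ E]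
    (Δ : Finset E)
    (hΔ0 : (0 : E) ∉ Δ)
    (hΔred : ∀ α ∈ Δ, ∀ t : ℝ, t • α ∈ Δ → t = 1 ∨ t = -1)
    (hΔrefl : ∀ α ∈ Δ, ∀ β ∈ Δ, β - (2 * ⟪β, α⟫ / ⟪α, α⟫) • α ∈ Δ)
    (hΔcrys : ∀ α ∈ Δ, ∀ β ∈ Δ, ∃ n : ℤ, 2 * ⟪β, α⟫ / ⟪α, α⟫ = (n : ℝ))
    (v : E) (hv : ∀ α ∈ Δ, ⟪α, v⟫ ≠ 0)
    (Δpos : Finset E) (hΔpos : Δpos = Δ.filter (fun α => 0 < ⟪α, v⟫))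
    (ρ : E) (hρ : ρ = (2 : ℝ)⁻¹ • ∑ α ∈ Δpos, α)    (μ : E) (hμ : ∀ α ∈ Δpos, 0 ≤ ⟪μ, α⟫)
    (ρμ : E) (hρμ : ρμ = (2 : ℝ)⁻¹ • ∑ α ∈ Δpos.filter (fun α => ⟪α, μ⟫ = 0), α)
    (lam : E) (hlam : lam = μ + ρμ)
    (hreg : ∀ α ∈ Δ, ⟪lam, α⟫ ≠ 0)
    (ρlam : E) (hρlam : ρlam = (2 : ℝ)⁻¹ • ∑ α ∈ Δ.filter (fun α => 0 < ⟪α, lam⟫), α)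
    (hadm : ∀ α ∈ Δ, ∃ n : ℤ, 2 * ⟪lam - ρlam, α⟫ / ⟪α, α⟫ = (n : ℝ))
    (ρμD : E) (hρμD : ρμD = (2 : ℝ)⁻¹ • ∑ α ∈ Δ.filter (fun α => 0 < ⟪α, μ⟫), α) :
    ∀ α ∈ Δ, ∃ n : ℤ, 2 * ⟪μ - ρμD, α⟫ / ⟪α, α⟫ = (n : ℝ) := by
  classical
  subst hΔpos
  -- Δ is symmetric under negation
  have hsym : ∀ α ∈ Δ, -α ∈ Δ := by
    intro α hα
    have hαne : α ≠ 0 := fun h => hΔ0 (h ▸ hα)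
    have hii : ⟪α, α⟫ ≠ 0 := fun h => hαne (inner_self_eq_zero.mp h)
    have h2 : (2 * ⟪α, α⟫ / ⟪α, α⟫ : ℝ) = 2 := by field_simp
    have := hΔrefl α hα α hα
    rw [h2] at this
    have heq : α - (2 : ℝ) • α = -α := by module
    rwa [heq] at this
  -- positivity of inner products with v for roots positive on μ
  have hposv : ∀ α ∈ Δ, 0 < ⟪α, μ⟫ → 0 < ⟪α, v⟫ := by
    intro α hα hpos
    by_contra hneg
    have hv' : ⟪α, v⟫ < 0 := lt_of_le_of_ne (not_lt.mp hneg) (hv α hα)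
    have hmem : -α ∈ Δ.filter (fun α => 0 < ⟪α, v⟫) := by
      refine mem_filter.mpr ⟨hsym α hα, ?_⟩
      rw [inner_neg_left]; linarith
    have := hμ _ hmem
    rw [real_inner_comm] at hpos
    rw [inner_neg_right] at this
    linarith
  -- lam is nonzero on all roots (symmetric form)
  have hreg' : ∀ α ∈ Δ, ⟪α, lam⟫ ≠ 0 := fun α hα => by
    rw [real_inner_comm]; exact hreg α hα
  -- Step A : ρμ + ρμD = ρ
  have hA : ∑ α ∈ Δ.filter (fun α => 0 < ⟪α, v⟫ ∧ ⟪α, μ⟫ = 0), α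
      + ∑ α ∈ Δ.filter (fun α => 0 < ⟪α, μ⟫), α
      = ∑ α ∈ Δ.filter (fun α => 0 < ⟪α, v⟫), α := by
    rw [sum_filter, sum_filter, sum_filter, ← sum_add_distrib]
    refine sum_congr rfl fun α hα => ?_
    rcases lt_trichotomy (⟪α, μ⟫ : ℝ) 0 with h | h | h
    · have hv' : ¬ 0 < ⟪α, v⟫ := by
        intro hvp
        have := hμ _ (mem_filter.mpr ⟨hα, hvp⟩)
        rw [real_inner_comm] at this
        linarith
      simp [hv', h.ne, not_lt.mpr h.le]
    · simp [h, lt_irrefl]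
    · simp [h.ne', h, hposv α hα h]
  have hA' : ρμ + ρμD = ρ := by
    rw [hρμ, hρμD, hρ, filter_filter, ← smul_add, hA]
  -- Step B : ρlam + ∑_{α pos, ⟪α,lam⟫<0} α = ρ
  set N : Finset E := (Δ.filter (fun α => 0 < ⟪α, v⟫)).filter (fun α => ⟪α, lam⟫ < 0) with hN
  set G : E → E := fun α =>
    (if 0 < ⟪α, lam⟫ then α else 0)
    + (2 : ℝ) • (if 0 < ⟪α, v⟫ ∧ ⟪α, lam⟫ < 0 then α else 0)
    - (if 0 < ⟪α, v⟫ then α else 0) with hG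
  have hGodd : ∀ α ∈ Δ, G (-α) = - G α := by
    intro α hα
    have hxv : ⟪α, v⟫ ≠ 0 := hv α hα
    have hxl : ⟪α, lam⟫ ≠ 0 := hreg' α hα
    rcases hxv.lt_or_gt with hv1 | hv1 <;> rcases hxl.lt_or_gt with hl1 | hl1 <;>
      simp [hG, inner_neg_left, neg_pos, hv1, hl1, not_lt.mpr hv1.le, not_lt.mpr hl1.le,
        lt_asymm hv1, lt_asymm hl1] <;> module
  have hGsum : ∑ α ∈ Δ, G α = 0 := by
    have hflip : ∑ α ∈ Δ, G α = ∑ α ∈ Δ, G (-α) := by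
      refine Finset.sum_nbij' (fun α => -α) (fun α => -α) ?_ ?_ ?_ ?_ ?_
      · intro a ha; exact hsym a ha
      · intro a ha; exact hsym a ha
      · intro a _; simp
      · intro a _; simp
      · intro a _; simp
    have h2 : ∑ α ∈ Δ, G (-α) = - ∑ α ∈ Δ, G α := by
      rw [← Finset.sum_neg_distrib]
      exact sum_congr rfl hGodd
    have h3 : ∑ α ∈ Δ, G α = - ∑ α ∈ Δ, G α := hflip.trans h2
    have h4 : (2 : ℝ) • ∑ α ∈ Δ, G α = 0 := by
      rw [two_smul]; nth_rewrite 2 [h3]; exact add_neg_cancel _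
    rcases smul_eq_zero.mp h4 with h | h
    · norm_num at h
    · exact h
  have hB : ∑ α ∈ Δ.filter (fun α => 0 < ⟪α, lam⟫), α + (2 : ℝ) • ∑ α ∈ N, α
      = ∑ α ∈ Δ.filter (fun α => 0 < ⟪α, v⟫), α := by
    have : ∑ α ∈ Δ, G α = ∑ α ∈ Δ.filter (fun α => 0 < ⟪α, lam⟫), α
        + (2 : ℝ) • ∑ α ∈ N, α - ∑ α ∈ Δ.filter (fun α => 0 < ⟪α, v⟫), α := by
      rw [hN, filter_filter, hG]
      rw [sum_filter, sum_filter, sum_filter, smul_sum, ← sum_add_distrib, ← sum_sub_distrib]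
    rw [this] at hGsum
    exact sub_eq_zero.mp hGsum
  have hB' : ρlam + ∑ α ∈ N, α = ρ := by
    rw [hρlam, hρ, ← hB, smul_add, smul_smul]
    norm_num
  -- the key vector identity
  have h3 : ρμ + ρμD = ρlam + ∑ α ∈ N, α := by rw [hA', ← hB']
  have hkey : μ - ρμD = (lam - ρlam) - ∑ α ∈ N, α := by
    calc μ - ρμD = (μ + ρμ) - (ρμ + ρμD) := by abel
      _ = lam - (ρlam + ∑ α ∈ N, α) := by rw [← hlam, h3]
      _ = (lam - ρlam) - ∑ α ∈ N, α := by abel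
  -- conclusion
  intro β hβ
  obtain ⟨n0, hn0⟩ := hadm β hβ
  refine ⟨n0 - ∑ α ∈ N, (if h : α ∈ Δ then Classical.choose (hΔcrys β hβ α h) else 0), ?_⟩
  push_cast
  rw [hkey, inner_sub_left, sum_inner, mul_sub, sub_div, hn0, mul_sum, sum_div]
  congr 1
  refine sum_congr rfl fun α hα => ?_
  have hαΔ : α ∈ Δ := by
    have := (mem_filter.mp hα).1
    exact (mem_filter.mp this).1
  rw [dif_pos hαΔ]
  exact Classical.choose_spec (hΔcrys β hβ α hαΔ)
end

section
/- Let μ ∈ C and suppose λ := μ + ρ_μ (the shift of μ) is regular, i.e. (λ,α) ≠ 0 for every α ∈ Δ. Then λ is admissible if and only if μ is admissible; that is, (λ − ρ(λ), α∨) ∈ ℤ for all α ∈ Δ if and only if (μ − ρ(μ), α∨) ∈ ℤ for all α ∈ Δ. -/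
open scoped RealInnerProductSpace
open Finset
theorem shift_admissible_iff
    {E : Type*} [NormedAddCommGroup E] [InnerProductSpace ℝ E] [FiniteDimensional ℝ E]
    (Δ : Finset E)
    (hΔ0 : (0 : E) ∉ Δ)
    (hΔred : ∀ α ∈ Δ, ∀ t : ℝ, t • α ∈ Δ → t = 1 ∨ t = -1)
    (hΔrefl : ∀ α ∈ Δ, ∀ β ∈ Δ, β - (2 * ⟪β, α⟫ / ⟪α, α⟫) • α ∈ Δ)
    (hΔcrys : ∀ α ∈ Δ, ∀ β ∈ Δ, ∃ n : ℤ, 2 * ⟪β, α⟫ / ⟪α, α⟫ = (n : ℝ))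
    (v : E) (hv : ∀ α ∈ Δ, ⟪α, v⟫ ≠ 0)
    (Δpos : Finset E) (hΔpos : Δpos = Δ.filter (fun α => 0 < ⟪α, v⟫))
    (ρ : E) (hρ : ρ = (2 : ℝ)⁻¹ • ∑ α ∈ Δpos, α)    (μ : E) (hμ : ∀ α ∈ Δpos, 0 ≤ ⟪μ, α⟫)
    (ρμ : E) (hρμ : ρμ = (2 : ℝ)⁻¹ • ∑ α ∈ Δpos.filter (fun α => ⟪α, μ⟫ = 0), α)
    (lam : E) (hlam : lam = μ + ρμ)
    (hreg : ∀ α ∈ Δ, ⟪lam, α⟫ ≠ 0)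
    (ρlam : E) (hρlam : ρlam = (2 : ℝ)⁻¹ • ∑ α ∈ Δ.filter (fun α => 0 < ⟪α, lam⟫), α)
    (ρμD : E) (hρμD : ρμD = (2 : ℝ)⁻¹ • ∑ α ∈ Δ.filter (fun α => 0 < ⟪α, μ⟫), α) :
    (∀ α ∈ Δ, ∃ n : ℤ, 2 * ⟪lam - ρlam, α⟫ / ⟪α, α⟫ = (n : ℝ)) ↔
    (∀ α ∈ Δ, ∃ n : ℤ, 2 * ⟪μ - ρμD, α⟫ / ⟪α, α⟫ = (n : ℝ)) := by
  classical
  -- the two sign-choice sets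
  set P : Finset E := Δ.filter (fun α => 0 < ⟪α, μ⟫ ∨ (⟪α, μ⟫ = 0 ∧ 0 < ⟪α, v⟫)) with hPdef
  set Q : Finset E := Δ.filter (fun α => 0 < ⟪α, lam⟫) with hQdef
  -- membership in P/Q flips under negation
  have hPQ : ∀ α ∈ P \ Q, -α ∈ Q \ P := by
    intro α hα
    rw [Finset.mem_sdiff] at hα ⊢
    obtain ⟨hαP, hαQ⟩ := hα
    rw [hPdef, Finset.mem_filter] at hαP
    obtain ⟨hαΔ, hp⟩ := hαP
    have hnegΔ : -α ∈ Δ := by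
      have h2 : (2 * ⟪α, α⟫ / ⟪α, α⟫ : ℝ) = 2 := by
        have : ⟪α, α⟫ ≠ (0 : ℝ) := by
          intro h
          exact hΔ0 (inner_self_eq_zero.mp h ▸ hαΔ)
        field_simp
      have := hΔrefl α hαΔ α hαΔ
      rw [h2] at this
      have e : α - (2 : ℝ) • α = -α := by module
      rwa [e] at this
    have hlamα : ⟪α, lam⟫ ≠ 0 := by
      have := hreg α hαΔ; rwa [real_inner_comm] at this
    have hlamneg : ⟪α, lam⟫ < 0 := by
      rcases lt_trichotomy (⟪α, lam⟫ : ℝ) 0 with h | h | h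
      · exact h
      · exact absurd h hlamα
      · exact absurd (by rw [hQdef, Finset.mem_filter]; exact ⟨hαΔ, h⟩) hαQ
    constructor
    · rw [hQdef, Finset.mem_filter]
      refine ⟨hnegΔ, ?_⟩
      rw [inner_neg_left]; linarith
    · rw [hPdef, Finset.mem_filter]
      rintro ⟨-, h | ⟨h1, h2⟩⟩
      · rw [inner_neg_left] at h
        rcases hp with h' | ⟨h', -⟩ <;> linarith
      · rw [inner_neg_left] at h1 h2
        rcases hp with h' | ⟨h', h''⟩ <;> linarith
  have hQP : ∀ α ∈ Q \ P, -α ∈ P \ Q := by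
    intro α hα
    rw [Finset.mem_sdiff] at hα ⊢
    obtain ⟨hαQ, hαP⟩ := hα
    rw [hQdef, Finset.mem_filter] at hαQ
    obtain ⟨hαΔ, hq⟩ := hαQ
    have hnegΔ : -α ∈ Δ := by
      have h2 : (2 * ⟪α, α⟫ / ⟪α, α⟫ : ℝ) = 2 := by
        have : ⟪α, α⟫ ≠ (0 : ℝ) := by
          intro h
          exact hΔ0 (inner_self_eq_zero.mp h ▸ hαΔ)
        field_simp
      have := hΔrefl α hαΔ α hαΔ
      rw [h2] at this
      have e : α - (2 : ℝ) • α = -α := by module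
      rwa [e] at this
    have hp' : ¬(0 < ⟪α, μ⟫ ∨ (⟪α, μ⟫ = 0 ∧ 0 < ⟪α, v⟫)) := by
      intro h
      exact hαP (by rw [hPdef, Finset.mem_filter]; exact ⟨hαΔ, h⟩)
    push_neg at hp'
    obtain ⟨hμ1, hμ2⟩ := hp'
    constructor
    · rw [hPdef, Finset.mem_filter]
      refine ⟨hnegΔ, ?_⟩
      rcases lt_trichotomy (⟪α, μ⟫ : ℝ) 0 with h | h | h
      · left; rw [inner_neg_left]; linarith
      · right
        have hv' : ⟪α, v⟫ ≠ 0 := hv α hαΔ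
        have hv'' : ⟪α, v⟫ < 0 := by
          rcases lt_trichotomy (⟪α, v⟫ : ℝ) 0 with h' | h' | h'
          · exact h'
          · exact absurd h' hv'
          · have := hμ2 h; linarith
        rw [inner_neg_left, inner_neg_left]
        exact ⟨by rw [h, neg_zero], by linarith⟩
      · linarith
    · rw [hQdef, Finset.mem_filter]
      rintro ⟨-, h⟩
      rw [inner_neg_left] at h
      linarith
  -- the sum over Q \ P is the negative of the sum over P \ Q
  have hsumneg : (∑ α ∈ Q \ P, α) = -∑ α ∈ P \ Q, α := by
    rw [← Finset.sum_neg_distrib]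
    refine Finset.sum_nbij' (fun α => -α) (fun α => -α) hQP ?_ ?_ ?_ ?_
    · intro α hα
      simpa using hPQ α hα
    · intro a _; simp
    · intro a _; simp
    · intro a _; simp
  -- ρμ + ρμD = half the sum over P
  have hsumP : ρμ + ρμD = (2 : ℝ)⁻¹ • ∑ α ∈ P, α := by
    rw [hρμ, hρμD, ← smul_add]
    congr 1
    rw [← Finset.sum_union (by
      rw [Finset.disjoint_left]
      intro a ha hb
      rw [hΔpos, Finset.filter_filter, Finset.mem_filter] at ha
      rw [Finset.mem_filter] at hb
      exact absurd hb.2 (by rw [ha.2.2]; exact lt_irrefl 0))]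
    apply Finset.sum_congr _ (fun _ _ => rfl)
    ext a
    rw [Finset.mem_union, hΔpos, Finset.filter_filter, Finset.mem_filter,
      Finset.mem_filter, hPdef, Finset.mem_filter]
    constructor
    · rintro (⟨h1, h2, h3⟩ | ⟨h1, h2⟩)
      · exact ⟨h1, Or.inr ⟨h3, h2⟩⟩
      · exact ⟨h1, Or.inl h2⟩
    · rintro ⟨h1, h2 | ⟨h2, h3⟩⟩
      · exact Or.inr ⟨h1, h2⟩
      · exact Or.inl ⟨h1, h3, h2⟩
  -- the key identity
  have hkey : lam - ρlam = (μ - ρμD) + ∑ α ∈ P \ Q, α := by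
    have hρlam' : ρlam = (2 : ℝ)⁻¹ • ∑ α ∈ Q, α := by rw [hρlam, hQdef]
    have hPsplit : (∑ α ∈ P, α) = (∑ α ∈ P ∩ Q, α) + ∑ α ∈ P \ Q, α := by
      have hu : P ∩ Q ∪ P \ Q = P := by
        ext a
        simp only [Finset.mem_union, Finset.mem_inter, Finset.mem_sdiff]
        tauto
      have hd : Disjoint (P ∩ Q) (P \ Q) := by
        rw [Finset.disjoint_left]
        intro a ha hb
        rw [Finset.mem_inter] at ha
        rw [Finset.mem_sdiff] at hb
        exact hb.2 ha.2
      rw [← Finset.sum_union hd, hu]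
    have hQsplit : (∑ α ∈ Q, α) = (∑ α ∈ P ∩ Q, α) + ∑ α ∈ Q \ P, α := by
      have hu : P ∩ Q ∪ Q \ P = Q := by
        ext a
        simp only [Finset.mem_union, Finset.mem_inter, Finset.mem_sdiff]
        tauto
      have hd : Disjoint (P ∩ Q) (Q \ P) := by
        rw [Finset.disjoint_left]
        intro a ha hb
        rw [Finset.mem_inter] at ha
        rw [Finset.mem_sdiff] at hb
        exact hb.2 ha.1
      rw [← Finset.sum_union hd, hu]
    have : ρμ + ρμD - ρlam = ∑ α ∈ P \ Q, α := by
      rw [hsumP, hρlam', ← smul_sub, hPsplit, hQsplit, hsumneg]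
      have e : (∑ α ∈ P ∩ Q, α) + (∑ α ∈ P \ Q, α) -
          ((∑ α ∈ P ∩ Q, α) + -∑ α ∈ P \ Q, α) = (2 : ℝ) • ∑ α ∈ P \ Q, α := by
        module
      rw [e, smul_smul]
      norm_num
    rw [hlam]
    have := this
    rw [← this]
    abel
  -- integrality of the correction term
  have hδint : ∀ β ∈ Δ, ∃ k : ℤ, 2 * ⟪(∑ α ∈ P \ Q, α : E), β⟫ / ⟪β, β⟫ = (k : ℝ) := by
    intro β hβ
    have hmem : ∀ α ∈ P \ Q, α ∈ Δ := by
      intro α hα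
      have := (Finset.mem_sdiff.mp hα).1
      rw [hPdef, Finset.mem_filter] at this
      exact this.1
    choose f hf using fun (α : E) (hα : α ∈ P \ Q) => hΔcrys β hβ α (hmem α hα)
    refine ⟨∑ α ∈ (P \ Q).attach, f α.1 α.2, ?_⟩
    rw [sum_inner, Finset.mul_sum, Finset.sum_div, ← Finset.sum_attach (P \ Q)
      (fun α => 2 * ⟪α, β⟫ / ⟪β, β⟫), Int.cast_sum]
    exact Finset.sum_congr rfl (fun α _ => hf α.1 α.2)
  -- conclude
  constructor
  · intro H β hβ
    obtain ⟨n, hn⟩ := H β hβ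
    obtain ⟨k, hk⟩ := hδint β hβ
    refine ⟨n - k, ?_⟩
    have : ⟪lam - ρlam, β⟫ = ⟪μ - ρμD, β⟫ + ⟪(∑ α ∈ P \ Q, α : E), β⟫ := by
      rw [hkey, inner_add_left]
    rw [this] at hn
    push_cast
    rw [← hn, ← hk]
    ring
  · intro H β hβ
    obtain ⟨n, hn⟩ := H β hβ
    obtain ⟨k, hk⟩ := hδint β hβ
    refine ⟨n + k, ?_⟩
    have : ⟪lam - ρlam, β⟫ = ⟪μ - ρμD, β⟫ + ⟪(∑ α ∈ P \ Q, α : E), β⟫ := by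
      rw [hkey, inner_add_left]
    rw [this]
    push_cast
    rw [← hn, ← hk]
    ring
end
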